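/- arXiv:1104.3001 — 7 statements merged into one kernel-verified Lean document; each statement's English description precedes it below -/
import Mathlib

section
/- Let m ≥ 1, let w_1, …, w_m ∈ ℝ, let I ⊆ ℝ be an interval, and let P : I → ℝ^m be a solution of the replicator equation with P(t) ∈ T^{m−1} for all t ∈ I. Then for every t ∈ I, the average fitness along the solution is differentiable with d/dt φ(P(t)) = Σ_{i=1}^m P_i(t)(w_i − φ(P(t)))^2 ≥ 0; in particular, t ↦ φ(P(t)) is nondecreasing on I. -/
/-- Along a solution of the replicator equation that stays in the simplex
on an interval `I`, the average fitness `φ(P) = ∑ i, w i * P i` is differentiable with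
`d/dt φ(P t) = ∑ i, P t i * (w i - φ(P t))^2 ≥ 0`; in particular `t ↦ φ(P t)` is
nondecreasing on `I`. -/
theorem average_fitness_nondecreasing
    (m : ℕ) (hm : 1 ≤ m) (w : Fin m → ℝ) (I : Set ℝ) (hI : I.OrdConnected)
    (P : ℝ → Fin m → ℝ)
    (hode : ∀ t ∈ I, ∀ k,
      HasDerivWithinAt (fun s => P s k) (P t k * (w k - ∑ j, w j * P t j)) I t)
    (hsimplex : ∀ t ∈ I, (∀ k, 0 ≤ P t k) ∧ ∑ k, P t k = 1) :
    (∀ t ∈ I,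
      HasDerivWithinAt (fun s => ∑ k, w k * P s k)
        (∑ k, P t k * (w k - ∑ j, w j * P t j) ^ 2) I t ∧
      0 ≤ ∑ k, P t k * (w k - ∑ j, w j * P t j) ^ 2) ∧
    MonotoneOn (fun t => ∑ k, w k * P t k) I := by
  have key : ∀ t ∈ I,
      HasDerivWithinAt (fun s => ∑ k, w k * P s k)
        (∑ k, P t k * (w k - ∑ j, w j * P t j) ^ 2) I t ∧
      0 ≤ ∑ k, P t k * (w k - ∑ j, w j * P t j) ^ 2 := by
    intro t ht
    set φ := ∑ j, w j * P t j with hφ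
    have hsum : ∑ k, P t k = 1 := (hsimplex t ht).2
    have hderiv : HasDerivWithinAt (fun s => ∑ k, w k * P s k)
        (∑ k, w k * (P t k * (w k - φ))) I t := by
      apply HasDerivWithinAt.fun_sum
      intro k _
      exact (hode t ht k).const_mul (w k)
    have heq : ∑ k, w k * (P t k * (w k - φ)) = ∑ k, P t k * (w k - φ) ^ 2 := by
      have h0 : ∑ k, P t k * (w k - φ) = 0 := by
        have h1 : ∑ k, P t k * (w k - φ) = (∑ k, w k * P t k) - (∑ k, P t k) * φ := by
          rw [Finset.sum_mul, ← Finset.sum_sub_distrib]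
          exact Finset.sum_congr rfl fun k _ => by ring
        rw [h1, hsum, one_mul, hφ, sub_self]
      calc ∑ k, w k * (P t k * (w k - φ))
          = ∑ k, (P t k * (w k - φ) ^ 2 + φ * (P t k * (w k - φ))) := by
            apply Finset.sum_congr rfl
            intro k _; ring
        _ = ∑ k, P t k * (w k - φ) ^ 2 + φ * ∑ k, P t k * (w k - φ) := by
            rw [Finset.sum_add_distrib, Finset.mul_sum]
        _ = ∑ k, P t k * (w k - φ) ^ 2 := by rw [h0, mul_zero, add_zero]
    refine ⟨heq ▸ hderiv, ?_⟩
    exact Finset.sum_nonneg fun k _ =>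
      mul_nonneg ((hsimplex t ht).1 k) (sq_nonneg _)
  refine ⟨key, ?_⟩
  apply monotoneOn_of_hasDerivWithinAt_nonneg hI.convex
    (f' := fun t => ∑ k, P t k * (w k - ∑ j, w j * P t j) ^ 2)
  · intro t ht
    exact (key t ht).1.continuousWithinAt
  · intro t ht
    exact ((key t (interior_subset ht)).1).mono interior_subset
  · intro t ht
    exact (key t (interior_subset ht)).2
end

section
/- Let m ≥ 1, let w_1, …, w_m ∈ ℝ, let p ∈ T^{m−1}, and suppose there exists an index i* with p_{i*} > 0 such that w_{i*} > w_j for every j ≠ i* with p_j > 0. Then any solution P : [0, ∞) → ℝ^m of the replicator equation with P(0) = p satisfies P_{i*}(t) → 1 and P_j(t) → 0 for every j ≠ i* as t → ∞; moreover φ(P(t)) → w_{i*} as t → ∞. In other words, every trajectory converges to the vertex equilibrium of the fittest genotype initially present. -/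
open Filter Set MeasureTheory intervalIntegral

/-- If the initial condition `p` lies in the simplex, `p istar > 0`, and
genotype `istar` is strictly fitter than every other genotype initially present, then
every solution of the replicator equation on `[0, ∞)` starting at `p` satisfies
`P t istar → 1`, `P t j → 0` for `j ≠ istar`, and `φ(P t) → w istar` as `t → ∞`. -/
theorem convergence_to_fittest_vertex
    (m : ℕ) (hm : 1 ≤ m) (w : Fin m → ℝ) (p : Fin m → ℝ)
    (hp : (∀ i, 0 ≤ p i) ∧ ∑ i, p i = 1)
    (istar : Fin m) (histar : 0 < p istar)
    (hfit : ∀ j, j ≠ istar → 0 < p j → w j < w istar)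
    (P : ℝ → Fin m → ℝ)
    (hP0 : ∀ i, P 0 i = p i)
    (hode : ∀ t ∈ Set.Ici (0 : ℝ), ∀ k,
      HasDerivWithinAt (fun s => P s k) (P t k * (w k - ∑ j, w j * P t j))
        (Set.Ici (0 : ℝ)) t) :
    Filter.Tendsto (fun t => P t istar) Filter.atTop (nhds 1) ∧
    (∀ j, j ≠ istar → Filter.Tendsto (fun t => P t j) Filter.atTop (nhds 0)) ∧
    Filter.Tendsto (fun t => ∑ k, w k * P t k) Filter.atTop (nhds (w istar)) := by
  classical
  obtain ⟨hp0, hp1⟩ := hp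
  set φt : ℝ → ℝ := fun t => ∑ j, w j * P t j with hφtdef
  -- continuity of the solution and of the mean fitness
  have hPc : ∀ k, ContinuousOn (fun s => P s k) (Set.Ici 0) :=
    fun k t ht => (hode t ht k).continuousWithinAt
  have hφc : ContinuousOn φt (Set.Ici 0) := by
    apply continuousOn_finset_sum
    intro j _
    exact continuousOn_const.mul (hPc j)
  -- the primitive of the mean fitness
  set A : ℝ → ℝ := fun t => ∫ s in (0:ℝ)..t, φt s with hAdef
  have hsub : ∀ x : ℝ, 0 ≤ x → Set.Ioi x ⊆ Set.Ici (0:ℝ) :=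
    fun x hx y hy => le_trans hx (le_of_lt hy)
  have hint : ∀ x : ℝ, 0 ≤ x → IntervalIntegrable φt volume 0 x := by
    intro x hx
    apply ContinuousOn.intervalIntegrable
    apply hφc.mono
    rw [Set.uIcc_of_le hx]
    exact Set.Icc_subset_Ici_self
  have hAd : ∀ x ∈ Set.Ici (0:ℝ), HasDerivWithinAt A (φt x) (Set.Ici x) x := by
    intro x hx
    have hmeas : StronglyMeasurableAtFilter φt (nhdsWithin x (Set.Ioi x)) volume :=
      ⟨Set.Ici (0:ℝ), mem_of_superset self_mem_nhdsWithin (hsub x hx),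
        hφc.aestronglyMeasurable measurableSet_Ici⟩
    exact intervalIntegral.integral_hasDerivWithinAt_right (hint x hx) hmeas
      ((hφc x hx).mono (hsub x hx))
  have hAc : ∀ T : ℝ, 0 ≤ T → ContinuousOn A (Set.Icc 0 T) := by
    intro T hT
    have := intervalIntegral.continuousOn_primitive_interval' (hint T hT)
      (Set.left_mem_uIcc (a := (0:ℝ)) (b := T))
    rwa [Set.uIcc_of_le hT] at this
  have hA0 : A 0 = 0 := intervalIntegral.integral_same
  -- key identity : P t k * exp (A t - w k * t) = p k on [0,∞)
  have hExpD : ∀ (c : ℝ), ∀ x ∈ Set.Ici (0:ℝ),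
      HasDerivWithinAt (fun s => Real.exp (A s - c * s))
        (Real.exp (A x - c * x) * (φt x - c)) (Set.Ici x) x := by
    intro c x hx
    have h1 : HasDerivWithinAt (fun s => A s - c * s) (φt x - c) (Set.Ici x) x := by
      have h2 : HasDerivWithinAt (fun s : ℝ => c * s) c (Set.Ici x) x := by
        simpa using ((hasDerivAt_id x).const_mul c).hasDerivWithinAt
      exact (hAd x hx).sub h2
    exact h1.exp
  have hExpC : ∀ (c T : ℝ), 0 ≤ T →
      ContinuousOn (fun s => Real.exp (A s - c * s)) (Set.Icc 0 T) := by
    intro c T hT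
    exact Real.continuous_exp.comp_continuousOn
      ((hAc T hT).sub ((continuous_const.mul continuous_id).continuousOn))
  have key : ∀ k, ∀ t ∈ Set.Ici (0:ℝ), P t k * Real.exp (A t - w k * t) = p k := by
    intro k t ht
    have hconst := constant_of_has_deriv_right_zero
      (f := fun s => P s k * Real.exp (A s - w k * s))
      (a := 0) (b := t)
      (((hPc k).mono Set.Icc_subset_Ici_self).mul (hExpC (w k) t ht))
      (by
        intro x hx
        have hx0 : x ∈ Set.Ici (0:ℝ) := hx.1
        have hP' := (hode x hx0 k).mono (Set.Ici_subset_Ici.mpr hx.1)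
        have hE := hExpD (w k) x hx0
        have := hP'.mul hE
        refine this.congr_deriv ?_
        simp only [hφtdef]
        ring)
    have := hconst t (Set.mem_Icc.mpr ⟨ht, le_refl t⟩)
    simpa [hP0, hA0] using this
  have keyP : ∀ k, ∀ t ∈ Set.Ici (0:ℝ), P t k = p k * Real.exp (w k * t - A t) := by
    intro k t ht
    have h := key k t ht
    have hne : Real.exp (A t - w k * t) ≠ 0 := Real.exp_ne_zero _
    have hinv : Real.exp (w k * t - A t) = (Real.exp (A t - w k * t))⁻¹ := by
      rw [← Real.exp_neg]; congr 1; ring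
    rw [hinv, ← h, mul_assoc, mul_inv_cancel₀ hne, mul_one]
  -- the total mass stays equal to 1
  have hSone : ∀ t ∈ Set.Ici (0:ℝ), ∑ k, P t k = 1 := by
    intro t ht
    have hconst := constant_of_has_deriv_right_zero
      (f := fun s => (1 - ∑ k, P s k) * Real.exp (A s))
      (a := 0) (b := t)
      ((continuousOn_const.sub (continuousOn_finset_sum _ fun k _ => (hPc k).mono
          Set.Icc_subset_Ici_self)).mul
        (by simpa using hExpC 0 t ht))
      (by
        intro x hx
        have hx0 : x ∈ Set.Ici (0:ℝ) := hx.1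
        have hS : HasDerivWithinAt (fun s => ∑ k, P s k)
            (∑ k, P x k * (w k - φt x)) (Set.Ici x) x :=
          HasDerivWithinAt.fun_sum fun k _ =>
            (hode x hx0 k).mono (Set.Ici_subset_Ici.mpr hx.1)
        have hE : HasDerivWithinAt (fun s => Real.exp (A s))
            (Real.exp (A x) * φt x) (Set.Ici x) x := by
          simpa using hExpD 0 x hx0
        have hD := ((hasDerivWithinAt_const x (Set.Ici x) (1:ℝ)).sub hS).mul hE
        refine hD.congr_deriv ?_
        have h2 : ∑ k, P x k * w k = φt x := by
          simp only [hφtdef]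
          exact Finset.sum_congr rfl fun k _ => by ring
        have hsum : ∑ k, P x k * (w k - φt x) = φt x - (∑ k, P x k) * φt x := by
          have h1 : ∑ k, P x k * (w k - φt x)
              = (∑ k, P x k * w k) - (∑ k, P x k) * φt x := by
            rw [Finset.sum_mul, ← Finset.sum_sub_distrib]
            exact Finset.sum_congr rfl fun k _ => by ring
          rw [h1, h2]
        rw [hsum]
        simp only [Pi.sub_apply]
        ring
      )
    have h := hconst t (Set.mem_Icc.mpr ⟨ht, le_refl t⟩)
    simp only [hP0, hp1, hA0, Real.exp_zero, sub_self, zero_mul, mul_one] at h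
    rcases mul_eq_zero.mp h with h1 | h2
    · linarith
    · exact absurd h2 (Real.exp_ne_zero _)
  -- explicit form with denominator N
  set N : ℝ → ℝ := fun t => ∑ k, p k * Real.exp ((w k - w istar) * t) with hNdef
  have hNt : ∀ t ∈ Set.Ici (0:ℝ), N t = Real.exp (A t - w istar * t) := by
    intro t ht
    have hsum : ∑ k, p k * Real.exp (w k * t - A t) = 1 := by
      rw [← hSone t ht]
      exact Finset.sum_congr rfl fun k _ => (keyP k t ht).symm
    have : ∀ k : Fin m, p k * Real.exp ((w k - w istar) * t)
        = p k * Real.exp (w k * t - A t) * Real.exp (A t - w istar * t) := by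
      intro k
      rw [mul_assoc, ← Real.exp_add]
      ring_nf
    rw [hNdef]
    simp only
    rw [Finset.sum_congr rfl fun k _ => this k, ← Finset.sum_mul, hsum, one_mul]
  have hNP : ∀ j, ∀ t ∈ Set.Ici (0:ℝ),
      P t j = p j * Real.exp ((w j - w istar) * t) / N t := by
    intro j t ht
    rw [hNt t ht, keyP j t ht, div_eq_mul_inv, ← Real.exp_neg, mul_assoc, ← Real.exp_add]
    ring_nf
  -- limits of each term in N
  have hterm : ∀ k, k ≠ istar →
      Tendsto (fun t => p k * Real.exp ((w k - w istar) * t)) atTop (nhds 0) := by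
    intro k hk
    rcases (hp0 k).eq_or_lt with h | h
    · simpa [← h] using tendsto_const_nhds (x := (0:ℝ)) (f := atTop (α := ℝ))
    · have hw : w k - w istar < 0 := sub_neg.mpr (hfit k hk h)
      have h1 : Tendsto (fun t : ℝ => (w k - w istar) * t) atTop atBot :=
        (tendsto_const_mul_atBot_of_neg hw).mpr tendsto_id
      have h2 : Tendsto (fun t : ℝ => Real.exp ((w k - w istar) * t)) atTop (nhds 0) :=
        Real.tendsto_exp_atBot.comp h1
      simpa using h2.const_mul (p k)
  have hNlim : Tendsto N atTop (nhds (p istar)) := by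
    have h : Tendsto (fun t : ℝ => ∑ k, p k * Real.exp ((w k - w istar) * t)) atTop
        (nhds (∑ k : Fin m, if k = istar then p istar else 0)) :=
      tendsto_finset_sum (Finset.univ : Finset (Fin m)) (fun k _ => by
        by_cases hk : k = istar
        · subst hk
          have hc : Tendsto (fun _ : ℝ => p k) atTop (nhds (p k)) := tendsto_const_nhds
          simpa using hc
        · simpa [hk] using hterm k hk)
    rw [Finset.sum_ite_eq' Finset.univ istar] at h
    simpa using h
  have hNne : p istar ≠ 0 := ne_of_gt histar
  -- first conclusion
  have h1 : Tendsto (fun t => P t istar) atTop (nhds 1) := by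
    have hd : Tendsto (fun t => p istar / N t) atTop (nhds (p istar / p istar)) :=
      tendsto_const_nhds.div hNlim hNne
    rw [div_self hNne] at hd
    apply hd.congr'
    filter_upwards [eventually_ge_atTop (0:ℝ)] with t ht
    rw [hNP istar t ht]
    simp
  have h2 : ∀ j, j ≠ istar → Tendsto (fun t => P t j) atTop (nhds 0) := by
    intro j hj
    have hd : Tendsto (fun t => p j * Real.exp ((w j - w istar) * t) / N t) atTop
        (nhds (0 / p istar)) := (hterm j hj).div hNlim hNne
    rw [zero_div] at hd
    apply hd.congr'
    filter_upwards [eventually_ge_atTop (0:ℝ)] with t ht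
    rw [hNP j t ht]
  refine ⟨h1, h2, ?_⟩
  have h3 : Tendsto (fun t : ℝ => ∑ k, w k * P t k) atTop
      (nhds (∑ k : Fin m, w k * if k = istar then 1 else 0)) :=
    tendsto_finset_sum (Finset.univ : Finset (Fin m)) (fun k _ => by
      by_cases hk : k = istar
      · subst hk
        simpa using h1.const_mul (w k)
      · simpa [hk] using (h2 k hk).const_mul (w k))
  simpa using h3
end

section
/- Let m ≥ 1, let w_1, …, w_m ∈ ℝ, let p ∈ T^{m−1}, and suppose that for some indices i and j one has p_j > 0 and w_j > w_i. Then any solution P : [0, ∞) → ℝ^m of the replicator equation with P(0) = p satisfies P_i(t) → 0 as t → ∞. In particular, the vertex equilibrium e_i of a genotype that does not have the highest fitness attracts no trajectory starting with a fitter genotype present. -/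
open Set Filter MeasureTheory intervalIntegral

/-- If the initial condition `p` lies in the simplex and for some indices
`i` and `j` one has `p j > 0` and `w j > w i`, then any solution of the replicator
equation on `[0, ∞)` starting at `p` satisfies `P t i → 0` as `t → ∞`: the vertex of a
genotype that does not have the highest fitness attracts no trajectory starting with a
fitter genotype present. -/
theorem non_fittest_frequency_tendsto_zero
    (m : ℕ) (hm : 1 ≤ m) (w : Fin m → ℝ) (p : Fin m → ℝ)
    (hp : (∀ k, 0 ≤ p k) ∧ ∑ k, p k = 1)
    (i j : Fin m) (hj : 0 < p j) (hw : w i < w j)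
    (P : ℝ → Fin m → ℝ)
    (hP0 : ∀ k, P 0 k = p k)
    (hode : ∀ t ∈ Set.Ici (0 : ℝ), ∀ k,
      HasDerivWithinAt (fun s => P s k) (P t k * (w k - ∑ l, w l * P t l))
        (Set.Ici (0 : ℝ)) t) :
    Filter.Tendsto (fun t => P t i) Filter.atTop (nhds 0) := by
  obtain ⟨hpnn, hpsum⟩ := hp
  set W : ℝ → ℝ := fun t => ∑ l, w l * P t l with hWdef
  -- continuity of the solution and of the mean fitness
  have hPc : ∀ k, ContinuousOn (fun t => P t k) (Ici (0:ℝ)) :=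
    fun k t ht => (hode t ht k).continuousWithinAt
  have hWc : ContinuousOn W (Ici (0:ℝ)) := by
    apply continuousOn_finset_sum
    exact fun l _ => continuousOn_const.mul (hPc l)
  set V : ℝ → ℝ := fun t => ∫ s in (0:ℝ)..t, W s with hVdef
  have hV0 : V 0 = 0 := by simp [hVdef]
  -- integrability of W
  have hint : ∀ t ∈ Ici (0:ℝ), IntervalIntegrable W volume 0 t := by
    intro t ht
    apply (hWc.mono ?_).intervalIntegrable
    rw [Set.uIcc_of_le ht]
    exact Icc_subset_Ici_self
  -- derivative of the primitive V (within `Ici t`)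
  have hVd : ∀ t ∈ Ici (0:ℝ), HasDerivWithinAt V (W t) (Ici t) t := by
    intro t ht
    refine integral_hasDerivWithinAt_right (hint t ht)
      ⟨Ici (0:ℝ), ?_, hWc.aestronglyMeasurable measurableSet_Ici⟩
      ((hWc t ht).mono (Ioi_subset_Ici le_rfl |>.trans (Ici_subset_Ici.2 ht)))
    exact mem_of_superset self_mem_nhdsWithin
      ((Ioi_subset_Ici le_rfl).trans (Ici_subset_Ici.2 ht))
  -- continuity of V on each interval [0, b]
  have hVc : ∀ b ∈ Ici (0:ℝ), ContinuousOn V (Icc 0 b) := by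
    intro b hb
    have := continuousOn_primitive_interval' (μ := volume) (hint b hb)
      (left_mem_uIcc (a := (0:ℝ)) (b := b))
    rwa [Set.uIcc_of_le hb] at this
  -- the key conservation laws: P t k * exp (V t - w k * t) = p k on [0, ∞)
  have hform : ∀ t ∈ Ici (0:ℝ), ∀ k, P t k * Real.exp (V t - w k * t) = p k := by
    intro t ht k
    have hcont : ContinuousOn (fun s => P s k * Real.exp (V s - w k * s)) (Icc 0 t) := by
      refine (((hPc k).mono Icc_subset_Ici_self).mul (Real.continuous_exp.comp_continuousOn ?_))
      exact (hVc t ht).sub (continuous_const.mul continuous_id).continuousOn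
    have hderiv : ∀ x ∈ Ico (0:ℝ) t,
        HasDerivWithinAt (fun s => P s k * Real.exp (V s - w k * s)) 0 (Ici x) x := by
      intro x hx
      have hx0 : x ∈ Ici (0:ℝ) := hx.1
      have hP : HasDerivWithinAt (fun s => P s k) (P x k * (w k - W x)) (Ici x) x :=
        (hode x hx0 k).mono (Ici_subset_Ici.2 hx.1)
      have hE : HasDerivWithinAt (fun s => Real.exp (V s - w k * s))
          (Real.exp (V x - w k * x) * (W x - w k)) (Ici x) x := by
        have h1 : HasDerivWithinAt (fun s => V s - w k * s) (W x - w k) (Ici x) x :=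
          (hVd x hx0).sub (((hasDerivWithinAt_id x (Ici x)).const_mul (w k)).congr_deriv
            (by ring))
        simpa [mul_comm] using h1.exp
      have := hP.mul hE
      exact this.congr_deriv (by ring)
    have := constant_of_has_deriv_right_zero hcont hderiv t (right_mem_Icc.2 ht)
    simpa [hP0 k, hV0] using this
  -- nonnegativity of the solution components
  have hnn : ∀ t ∈ Ici (0:ℝ), ∀ k, 0 ≤ P t k := by
    intro t ht k
    have h := hform t ht k
    have hepos : 0 < Real.exp (V t - w k * t) := Real.exp_pos _
    nlinarith [hpnn k]
  -- the sum stays equal to 1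
  have hsum : ∀ t ∈ Ici (0:ℝ), ∑ k, P t k = 1 := by
    intro t ht
    have hcont : ContinuousOn (fun s => ((∑ k, P s k) - 1) * Real.exp (V s)) (Icc 0 t) := by
      refine (ContinuousOn.sub ?_ continuousOn_const).mul
        (Real.continuous_exp.comp_continuousOn (hVc t ht))
      exact continuousOn_finset_sum _ fun k _ => (hPc k).mono Icc_subset_Ici_self
    have hderiv : ∀ x ∈ Ico (0:ℝ) t,
        HasDerivWithinAt (fun s => ((∑ k, P s k) - 1) * Real.exp (V s)) 0 (Ici x) x := by
      intro x hx
      have hx0 : x ∈ Ici (0:ℝ) := hx.1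
      have hS : HasDerivWithinAt (fun s => (∑ k, P s k) - 1)
          (∑ k, P x k * (w k - W x)) (Ici x) x := by
        refine (HasDerivWithinAt.fun_sum fun k _ => ?_).sub_const 1
        exact (hode x hx0 k).mono (Ici_subset_Ici.2 hx.1)
      have hE : HasDerivWithinAt (fun s => Real.exp (V s)) (Real.exp (V x) * W x) (Ici x) x := by
        simpa [mul_comm] using (hVd x hx0).exp
      have hsum_eq : ∑ k, P x k * (w k - W x) = W x - W x * ∑ k, P x k := by
        have hWW : ∑ k, P x k * w k = W x := by
          rw [hWdef]; exact Finset.sum_congr rfl fun k _ => mul_comm _ _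
        simp only [mul_sub, Finset.sum_sub_distrib, ← Finset.sum_mul, hWW]
        ring
      have := hS.mul hE
      exact this.congr_deriv (by rw [hsum_eq]; ring)
    have := constant_of_has_deriv_right_zero hcont hderiv t (right_mem_Icc.2 ht)
    have h0 : ((∑ k, P 0 k) - 1) * Real.exp (V 0) = 0 := by
      simp [hP0, hpsum]
    rw [h0] at this
    have hepos : Real.exp (V t) ≠ 0 := (Real.exp_pos _).ne'
    have := mul_eq_zero.mp this
    rcases this with h | h
    · linarith [sub_eq_zero.mp h]
    · exact absurd h hepos
  -- each component is at most 1
  have hle1 : ∀ t ∈ Ici (0:ℝ), P t j ≤ 1 := by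
    intro t ht
    calc P t j ≤ ∑ k, P t k :=
          Finset.single_le_sum (fun k _ => hnn t ht k) (Finset.mem_univ j)
      _ = 1 := hsum t ht
  -- explicit formulas
  have hPi : ∀ t ∈ Ici (0:ℝ), P t i = p i * Real.exp (w i * t - V t) := by
    intro t ht
    have h := hform t ht i
    rw [← h, mul_assoc, ← Real.exp_add]
    simp
  have hPj : ∀ t ∈ Ici (0:ℝ), P t j = p j * Real.exp (w j * t - V t) := by
    intro t ht
    have h := hform t ht j
    rw [← h, mul_assoc, ← Real.exp_add]
    simp
  -- the squeeze bound
  have hbound : ∀ t ∈ Ici (0:ℝ),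
      P t i ≤ (p i / p j) * Real.exp ((w i - w j) * t) := by
    intro t ht
    have h1 : Real.exp (w j * t - V t) ≤ 1 / p j := by
      have := hle1 t ht
      rw [hPj t ht] at this
      rw [le_div_iff₀ hj]
      linarith [mul_comm (p j) (Real.exp (w j * t - V t))]
    have h2 : Real.exp (w i * t - V t)
        = Real.exp ((w i - w j) * t) * Real.exp (w j * t - V t) := by
      rw [← Real.exp_add]; ring_nf
    rw [hPi t ht, h2]
    have h3 : p i * (Real.exp ((w i - w j) * t) * Real.exp (w j * t - V t))
        ≤ p i * (Real.exp ((w i - w j) * t) * (1 / p j)) := by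
      apply mul_le_mul_of_nonneg_left _ (hpnn i)
      exact mul_le_mul_of_nonneg_left h1 (Real.exp_pos _).le
    calc p i * (Real.exp ((w i - w j) * t) * Real.exp (w j * t - V t))
        ≤ p i * (Real.exp ((w i - w j) * t) * (1 / p j)) := h3
      _ = (p i / p j) * Real.exp ((w i - w j) * t) := by ring
  -- the upper bound tends to 0
  have htend : Tendsto (fun t => (p i / p j) * Real.exp ((w i - w j) * t)) atTop (nhds 0) := by
    have h1 : Tendsto (fun t : ℝ => (w i - w j) * t) atTop atBot := by
      apply Tendsto.const_mul_atTop_of_neg (by linarith) tendsto_id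
    have h2 : Tendsto (fun t => Real.exp ((w i - w j) * t)) atTop (nhds 0) :=
      Real.tendsto_exp_atBot.comp h1
    simpa using h2.const_mul (p i / p j)
  -- squeeze
  apply squeeze_zero' ?_ ?_ htend
  · filter_upwards [eventually_ge_atTop (0:ℝ)] with t ht
    exact hnn t ht i
  · filter_upwards [eventually_ge_atTop (0:ℝ)] with t ht
    exact hbound t ht
end

section
/- Let n ≥ 1 and let Q be an n×n irreducible generator matrix (q_{kl} > 0 for all k ≠ l and every row of Q sums to zero). Then there exists a unique vector π ∈ ℝ^n with π_k > 0 for all k, Σ_{k=1}^n π_k = 1, and πQ = 0. That is, Q has a unique stationary distribution, and this stationary distribution is strictly positive. -/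
open Finset Matrix

/-- If a nonnegative left-null vector of `Q` vanishes at one coordinate, it vanishes
everywhere (using only the corresponding column equation). -/
lemma gen_zero_comp {n : ℕ} (Q : Matrix (Fin n) (Fin n) ℝ)
    (hQoff : ∀ k l, k ≠ l → 0 < Q k l)
    (η : Fin n → ℝ) (hη : ∀ k, 0 ≤ η k) (k0 : Fin n)
    (hcol : ∑ k, η k * Q k k0 = 0) (h0 : η k0 = 0) :
    ∀ k, η k = 0 := by
  have hsum : ∑ j ∈ univ.erase k0, η j * Q j k0 = 0 := by
    rw [← Finset.add_sum_erase _ _ (mem_univ k0)] at hcol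
    rw [h0] at hcol; simpa using hcol
  intro k
  by_cases hk : k = k0
  · rw [hk]; exact h0
  · have hterm : η k * Q k k0 = 0 :=
      (Finset.sum_eq_zero_iff_of_nonneg (fun j hj =>
        mul_nonneg (hη j) (hQoff j k0 (Finset.ne_of_mem_erase hj)).le)).mp hsum k
        (Finset.mem_erase.mpr ⟨hk, mem_univ k⟩)
    have hpos := hQoff k k0 hk
    rcases mul_eq_zero.mp hterm with h | h
    · exact h
    · exact absurd h (ne_of_gt hpos)

/-- A matrix with zero row sums has a nonzero left-null vector. -/
lemma gen_exists_left_null {n : ℕ} (hn : 1 ≤ n) (Q : Matrix (Fin n) (Fin n) ℝ)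
    (hQrow : ∀ k, ∑ l, Q k l = 0) :
    ∃ v : Fin n → ℝ, v ≠ 0 ∧ ∀ l, ∑ k, v k * Q k l = 0 := by
  have hdet : Q.det = 0 := by
    rw [← Matrix.exists_mulVec_eq_zero_iff]
    refine ⟨fun _ => 1, Function.ne_iff.mpr ⟨⟨0, hn⟩, one_ne_zero⟩, funext fun k => ?_⟩
    simpa [Matrix.mulVec, dotProduct] using hQrow k
  have hdetT : Qᵀ.det = 0 := by rwa [Matrix.det_transpose]
  obtain ⟨v, hv, hvQ⟩ := Matrix.exists_mulVec_eq_zero_iff.mpr hdetT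
  refine ⟨v, hv, fun l => ?_⟩
  have := congrFun hvQ l
  simpa [Matrix.mulVec, dotProduct, Matrix.transpose_apply, mul_comm] using this

/-- If `v` is a left-null vector of an irreducible generator matrix `Q`, so is `|v|`. -/
lemma gen_abs_left_null {n : ℕ} (Q : Matrix (Fin n) (Fin n) ℝ)
    (hQoff : ∀ k l, k ≠ l → 0 < Q k l) (hQrow : ∀ k, ∑ l, Q k l = 0)
    (v : Fin n → ℝ) (hv : ∀ l, ∑ k, v k * Q k l = 0) :
    ∀ l, ∑ k, |v k| * Q k l = 0 := by
  -- diagonal entries are nonpositive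
  have hdiag : ∀ k, Q k k ≤ 0 := by
    intro k
    have h := hQrow k
    rw [← Finset.add_sum_erase _ _ (mem_univ k)] at h
    have h2 : 0 ≤ ∑ l ∈ univ.erase k, Q k l :=
      Finset.sum_nonneg fun l hl => (hQoff k l (Ne.symm (Finset.ne_of_mem_erase hl))).le
    linarith
  set c : ℝ := 1 + ∑ k, (-Q k k) with hc
  have hcpos : 0 < c := by
    have : 0 ≤ ∑ k, (-Q k k) := Finset.sum_nonneg fun k _ => by linarith [hdiag k]
    linarith
  set ε : ℝ := 1 / c with hε
  have hεpos : 0 < ε := by positivity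
  set P : Matrix (Fin n) (Fin n) ℝ := fun k l => (if k = l then (1:ℝ) else 0) + ε * Q k l with hP
  have hPpos : ∀ k l, 0 ≤ P k l := by
    intro k l
    by_cases h : k = l
    · subst h
      have h1 : -Q k k ≤ ∑ j, (-Q j j) :=
        Finset.single_le_sum (f := fun j => -Q j j)
          (fun j _ => by simpa using neg_nonneg.mpr (hdiag j)) (mem_univ k)
      have h2 : -Q k k < c := by rw [hc]; linarith
      have h3 : ε * (-Q k k) < ε * c := mul_lt_mul_of_pos_left h2 hεpos
      have h4 : ε * c = 1 := by rw [hε, one_div, inv_mul_cancel₀ hcpos.ne']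
      have h5 : ε * Q k k = -(ε * (-Q k k)) := by ring
      simp only [hP, eq_self_iff_true, if_true]
      rw [h5]
      linarith
    · have := hQoff k l h
      simp only [hP, if_neg h]
      nlinarith
  have hProw : ∀ k, ∑ l, P k l = 1 := by
    intro k
    simp only [hP]
    rw [Finset.sum_add_distrib, ← Finset.mul_sum, hQrow k]
    simp
  have hvP : ∀ l, ∑ k, v k * P k l = v l := by
    intro l
    simp only [hP]
    have : ∀ k, v k * ((if k = l then (1:ℝ) else 0) + ε * Q k l)
        = (if k = l then v l else 0) + ε * (v k * Q k l) := by
      intro k; by_cases h : k = l <;> simp [h] <;> ring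
    rw [Finset.sum_congr rfl fun k _ => this k, Finset.sum_add_distrib, ← Finset.mul_sum, hv l]
    simp
  -- u = |v| satisfies u P ≥ u coordinatewise, with equal totals, hence u P = u
  set u : Fin n → ℝ := fun k => |v k| with hu
  have hle : ∀ l, u l ≤ ∑ k, u k * P k l := by
    intro l
    calc u l = |∑ k, v k * P k l| := by rw [hvP l]
    _ ≤ ∑ k, |v k * P k l| := Finset.abs_sum_le_sum_abs _ _
    _ = ∑ k, u k * P k l := by
        refine Finset.sum_congr rfl fun k _ => ?_
        rw [abs_mul, abs_of_nonneg (hPpos k l)]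
  have htot : ∑ l, ((∑ k, u k * P k l) - u l) = 0 := by
    rw [Finset.sum_sub_distrib, Finset.sum_comm]
    have : ∀ k, ∑ l, u k * P k l = u k := by
      intro k; rw [← Finset.mul_sum, hProw k, mul_one]
    rw [Finset.sum_congr rfl fun k _ => this k]
    ring
  have heq : ∀ l, ∑ k, u k * P k l = u l := by
    intro l
    have := (Finset.sum_eq_zero_iff_of_nonneg
      (fun j _ => sub_nonneg.mpr (hle j))).mp htot l (mem_univ l)
    linarith
  intro l
  have hexp : ∑ k, u k * P k l = u l + ε * ∑ k, u k * Q k l := by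
    simp only [hP]
    have : ∀ k, u k * ((if k = l then (1:ℝ) else 0) + ε * Q k l)
        = (if k = l then u l else 0) + ε * (u k * Q k l) := by
      intro k; by_cases h : k = l <;> simp [h] <;> ring
    rw [Finset.sum_congr rfl fun k _ => this k, Finset.sum_add_distrib, ← Finset.mul_sum]
    simp
  have := heq l
  rw [hexp] at this
  have h0 : ε * ∑ k, u k * Q k l = 0 := by linarith
  rcases mul_eq_zero.mp h0 with h | h
  · exact absurd h (ne_of_gt hεpos)
  · exact h

/-- An irreducible generator matrix `Q` (off-diagonal entries positive,
rows summing to zero) has a unique stationary distribution `π` (`π ≥ 0`, `∑ π = 1`,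
`πQ = 0`), and this stationary distribution is strictly positive. -/
theorem unique_positive_stationary_distribution
    (n : ℕ) (hn : 1 ≤ n) (Q : Matrix (Fin n) (Fin n) ℝ)
    (hQoff : ∀ k l, k ≠ l → 0 < Q k l)
    (hQrow : ∀ k, ∑ l, Q k l = 0) :
    (∃! π : Fin n → ℝ,
      (∀ k, 0 ≤ π k) ∧ (∑ k, π k = 1) ∧ (∀ l, ∑ k, π k * Q k l = 0)) ∧
    (∀ π : Fin n → ℝ,
      (∀ k, 0 ≤ π k) → (∑ k, π k = 1) → (∀ l, ∑ k, π k * Q k l = 0) →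
      ∀ k, 0 < π k) := by
  -- Part 2 : strict positivity of any stationary distribution
  have hpos : ∀ π : Fin n → ℝ,
      (∀ k, 0 ≤ π k) → (∑ k, π k = 1) → (∀ l, ∑ k, π k * Q k l = 0) →
      ∀ k, 0 < π k := by
    intro π hge hsum hnull k
    rcases lt_or_eq_of_le (hge k) with h | h
    · exact h
    · exfalso
      have hzero := gen_zero_comp Q hQoff π hge k (hnull k) h.symm
      rw [Finset.sum_congr rfl fun j _ => hzero j] at hsum
      simp at hsum
  -- Existence
  obtain ⟨v, hvne, hvnull⟩ := gen_exists_left_null hn Q hQrow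
  have habs := gen_abs_left_null Q hQoff hQrow v hvnull
  set S : ℝ := ∑ k, |v k| with hS
  have hSpos : 0 < S := by
    obtain ⟨k, hk⟩ := Function.ne_iff.mp hvne
    have h1 : 0 < |v k| := abs_pos.mpr hk
    have h2 : |v k| ≤ S := Finset.single_le_sum (f := fun j => |v j|)
      (fun j _ => abs_nonneg _) (mem_univ k)
    linarith
  set π : Fin n → ℝ := fun k => |v k| / S with hπ
  have hπge : ∀ k, 0 ≤ π k := fun k => div_nonneg (abs_nonneg _) hSpos.le
  have hπsum : ∑ k, π k = 1 := by
    simp only [hπ, div_eq_mul_inv, ← Finset.sum_mul, ← hS]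
    field_simp
  have hπnull : ∀ l, ∑ k, π k * Q k l = 0 := by
    intro l
    simp only [hπ, div_eq_mul_inv]
    have : ∀ k, |v k| * S⁻¹ * Q k l = S⁻¹ * (|v k| * Q k l) := fun k => by ring
    rw [Finset.sum_congr rfl fun k _ => this k, ← Finset.mul_sum, habs l, mul_zero]
  -- Uniqueness
  refine ⟨⟨π, ⟨hπge, hπsum, hπnull⟩, ?_⟩, hpos⟩
  rintro π' ⟨hge', hsum', hnull'⟩
  have hπpos := hpos π hπge hπsum hπnull
  set δ : Fin n → ℝ := fun k => π' k - π k with hδ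
  have hδnull : ∀ l, ∑ k, δ k * Q k l = 0 := by
    intro l
    simp only [hδ, sub_mul, Finset.sum_sub_distrib, hnull' l, hπnull l, sub_zero]
  have hδsum : ∑ k, δ k = 0 := by
    simp only [hδ, Finset.sum_sub_distrib, hsum', hπsum, sub_self]
  obtain ⟨k0, _, hk0min⟩ := Finset.exists_min_image univ (fun k => δ k / π k)
    ⟨⟨0, hn⟩, mem_univ _⟩
  set t : ℝ := δ k0 / π k0 with ht
  set η : Fin n → ℝ := fun k => δ k - t * π k with hη
  have hηge : ∀ k, 0 ≤ η k := by
    intro k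
    have h1 : t ≤ δ k / π k := hk0min k (mem_univ k)
    have h2 := hπpos k
    have h3 : t * π k ≤ δ k := (le_div_iff₀ h2).mp h1
    simp only [hη]; linarith
  have hη0 : η k0 = 0 := by
    simp only [hη, ht]
    rw [div_mul_cancel₀ _ (hπpos k0).ne']
    ring
  have hηnull : ∑ k, η k * Q k k0 = 0 := by
    simp only [hη, sub_mul, Finset.sum_sub_distrib, hδnull k0]
    have : ∀ k, t * π k * Q k k0 = t * (π k * Q k k0) := fun k => by ring
    rw [Finset.sum_congr rfl fun k _ => this k, ← Finset.mul_sum, hπnull k0]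
    simp
  have hηzero := gen_zero_comp Q hQoff η hηge k0 hηnull hη0
  have hδeq : ∀ k, δ k = t * π k := by
    intro k
    have := hηzero k
    simp only [hη] at this
    linarith
  have ht0 : t = 0 := by
    have : ∑ k, δ k = t * ∑ k, π k := by
      rw [Finset.sum_congr rfl fun k _ => hδeq k, ← Finset.mul_sum]
    rw [hδsum, hπsum, mul_one] at this
    exact this.symm
  funext k
  have := hδeq k
  rw [ht0, zero_mul] at this
  simp only [hδ] at this
  linarith
end

section
/- (Lyapunov function for Theorem 3.2, asymptotic stability in probability of the fittest genotype.) Let m ≥ 2, n ≥ 1, let w_i^k ∈ ℝ (1 ≤ i ≤ m, 1 ≤ k ≤ n) be fitness values, let Q = (q_{kl}) be an n×n irreducible generator matrix with stationary distribution π, and assume π·w_1 > π·w_i for all i = 2, …, m, where w_i = (w_i^1, …, w_i^n). Set a_{i,1}^k = w_i^k − w_1^k and β_i = −Σ_{k=1}^n π_k a_{i,1}^k (so β_i > 0). Then there exist vectors c_2, …, c_m ∈ ℝ^n with Q c_i = a_{i,1} + β_i (1, …, 1) for each i, a number γ ∈ (0, 1) with γ c_i^k < 1 for all i and k, and a radius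 r ∈ (0, 1) such that, defining V(P, k) = Σ_{i=2}^m (1 − γ c_i^k) P_i^γ for P = (P_2, …, P_m) with all P_i ≥ 0, and defining ℒV(P, k) = Σ_{i=2}^m γ (1 − γ c_i^k) P_i^γ (a_{i,1}^k (1 − P_i) − Σ_{j=2, j≠i}^m a_{j,1}^k P_j) + Σ_{l=1}^n q_{kl} V(P, l) (which coincides with F(P,k)·∇_P V(P,k) + Σ_l q_{kl} V(P,l) whenever all P_i > 0), the following hold: V(·, k) is continuous, nonnegative, and vanishes only at P = 0; and for every ρ ∈ (0, r) there exists κ > 0 such that ℒV(P, k) ≤ −κ for every k ∈ {1, …, n} and every P with P_i ≥ 0 for all i, Σ_{i=2}^m P_i ≤ 1, and ρ ≤ |P| ≤ r. -/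
open Finset

lemma gen_const {n : ℕ} (hn : 1 ≤ n) (Q : Matrix (Fin n) (Fin n) ℝ)
    (hQoff : ∀ k l, k ≠ l → 0 < Q k l) (hQrow : ∀ k, ∑ l, Q k l = 0)
    (c : Fin n → ℝ) (hc : ∀ k, ∑ l, Q k l * c l = 0) :
    ∀ l, c l = c ⟨0, hn⟩ := by
  have hne : (univ : Finset (Fin n)).Nonempty := ⟨⟨0, hn⟩, mem_univ _⟩
  obtain ⟨k₀, -, hk₀⟩ := Finset.exists_max_image (univ : Finset (Fin n)) c hne
  have hsum : ∑ l, Q k₀ l * (c l - c k₀) = 0 := by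
    have h1 := hc k₀
    have h2 := hQrow k₀
    have : ∑ l, Q k₀ l * (c l - c k₀)
        = (∑ l, Q k₀ l * c l) - (∑ l, Q k₀ l) * c k₀ := by
      rw [Finset.sum_mul, ← Finset.sum_sub_distrib]
      exact Finset.sum_congr rfl fun l _ => by ring
    rw [this, h1, h2]; ring
  have hterm : ∀ l ∈ (univ : Finset (Fin n)), Q k₀ l * (c l - c k₀) ≤ 0 := by
    intro l _
    rcases eq_or_ne l k₀ with rfl | h
    · simp
    · have h1 := hQoff k₀ l (Ne.symm h)
      have h2 : c l ≤ c k₀ := hk₀ l (mem_univ _)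
      nlinarith
  have hall := (Finset.sum_eq_zero_iff_of_nonpos hterm).mp hsum
  have hconst : ∀ l, c l = c k₀ := by
    intro l
    rcases eq_or_ne l k₀ with rfl | h
    · rfl
    · have h1 := hQoff k₀ l (Ne.symm h)
      have := hall l (mem_univ _)
      have : c l - c k₀ = 0 := by
        rcases mul_eq_zero.mp this with h' | h'
        · exact absurd h' (ne_of_gt h1)
        · exact h'
      linarith
  intro l; rw [hconst l, hconst ⟨0, hn⟩]

lemma gen_surj {n : ℕ} (hn : 1 ≤ n) (Q : Matrix (Fin n) (Fin n) ℝ)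
    (hQoff : ∀ k l, k ≠ l → 0 < Q k l) (hQrow : ∀ k, ∑ l, Q k l = 0)
    (π : Fin n → ℝ) (hπ1 : ∑ k, π k = 1) (hπQ : ∀ l, ∑ k, π k * Q k l = 0)
    (b : Fin n → ℝ) (hb : ∑ k, π k * b k = 0) :
    ∃ c : Fin n → ℝ, ∀ k, ∑ l, Q k l * c l = b k := by
  haveI : Nonempty (Fin n) := ⟨⟨0, hn⟩⟩
  set L : (Fin n → ℝ) →ₗ[ℝ] (Fin n → ℝ) := Q.mulVecLin with hL
  set φ : (Fin n → ℝ) →ₗ[ℝ] ℝ :=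
    { toFun := fun v => ∑ k, π k * v k
      map_add' := by intro x y; simp [mul_add, Finset.sum_add_distrib]
      map_smul' := by
        intro r x
        simp [Finset.mul_sum, mul_comm, mul_left_comm] } with hφ
  have hmem : ∀ v k, L v k = ∑ l, Q k l * v l := by
    intro v k
    simp [hL, Matrix.mulVecLin_apply, Matrix.mulVec, dotProduct]
  have hone : (fun _ : Fin n => (1:ℝ)) ∈ LinearMap.ker L := by
    rw [LinearMap.mem_ker]
    funext k
    rw [hmem]
    simpa using hQrow k
  have hkerL : LinearMap.ker L = Submodule.span ℝ {fun _ : Fin n => (1:ℝ)} := by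
    apply le_antisymm
    · intro v hv
      have hv' : ∀ k, ∑ l, Q k l * v l = 0 := by
        intro k; rw [← hmem]; exact congrFun (LinearMap.mem_ker.mp hv) k
      have := gen_const hn Q hQoff hQrow v hv'
      have : v = (v ⟨0, hn⟩) • (fun _ : Fin n => (1:ℝ)) := by
        funext l; simp [this l]
      rw [this]
      exact Submodule.smul_mem _ _ (Submodule.mem_span_singleton_self _)
    · rw [Submodule.span_le, Set.singleton_subset_iff]
      exact hone
  have hone_ne : (fun _ : Fin n => (1:ℝ)) ≠ 0 := by
    intro h
    have := congrFun h ⟨0, hn⟩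
    norm_num at this
  have hkerrank : Module.finrank ℝ (LinearMap.ker L) = 1 := by
    rw [hkerL]; exact finrank_span_singleton hone_ne
  have hrangerank : Module.finrank ℝ (LinearMap.range L) = n - 1 := by
    have := LinearMap.finrank_range_add_finrank_ker L
    rw [hkerrank, Module.finrank_fin_fun] at this
    omega
  have hφsurj : LinearMap.range φ = ⊤ := by
    rw [LinearMap.range_eq_top]
    intro r
    refine ⟨r • (fun _ : Fin n => (1:ℝ)), ?_⟩
    simp [hφ, ← Finset.mul_sum, hπ1]
  have hkerφ : Module.finrank ℝ (LinearMap.ker φ) = n - 1 := by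
    have := LinearMap.finrank_range_add_finrank_ker φ
    rw [hφsurj, Module.finrank_fin_fun] at this
    simp [Module.finrank_self] at this
    omega
  have hle : LinearMap.range L ≤ LinearMap.ker φ := by
    rintro v ⟨u, rfl⟩
    rw [LinearMap.mem_ker]
    show ∑ k, π k * L u k = 0
    calc ∑ k, π k * L u k = ∑ k, ∑ l, π k * (Q k l * u l) := by
          refine Finset.sum_congr rfl fun k _ => ?_
          rw [hmem, Finset.mul_sum]
      _ = ∑ l, (∑ k, π k * Q k l) * u l := by
          rw [Finset.sum_comm]
          refine Finset.sum_congr rfl fun l _ => ?_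
          rw [Finset.sum_mul]
          exact Finset.sum_congr rfl fun k _ => by ring
      _ = 0 := by simp [hπQ]
  have heq : LinearMap.range L = LinearMap.ker φ :=
    Submodule.eq_of_le_of_finrank_le hle (by rw [hkerφ, hrangerank])
  have hbmem : b ∈ LinearMap.ker φ := hb
  rw [← heq] at hbmem
  obtain ⟨c, hc⟩ := hbmem
  exact ⟨c, fun k => by rw [← hmem, hc]⟩

set_option maxHeartbeats 1000000 in
/-- Lyapunov function for Theorem 3.2: if genotype `1` (index `0`) has
the strictly highest mean fitness with respect to the stationary distribution `π` of the
irreducible generator matrix `Q`, then there are vectors `c i` solving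
`Q (c i) = a i + β i 𝟙` (with `a i k = w i k - w 0 k` and `β i = -π·(a i)`), an exponent
`γ ∈ (0,1)` with `γ c i k < 1`, and a radius `r ∈ (0,1)`, such that the function
`V P k = ∑_{i ≠ 0} (1 - γ c i k) P i ^ γ` (in reduced coordinates, where `P 0` is
eliminated) is continuous, nonnegative, vanishes only at `P = 0`, and its stochastic Lie
derivative `ℒV` along the reduced replicator vector field satisfies `ℒV(P, k) ≤ -κ(ρ)`
on every annulus `ρ ≤ |P| ≤ r` inside the reduced simplex. -/
theorem lyapunov_for_asymptotic_stability_in_probability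
    (m n : ℕ) [NeZero m] (hm : 2 ≤ m) (hn : 1 ≤ n)
    (w : Fin m → Fin n → ℝ)
    (Q : Matrix (Fin n) (Fin n) ℝ)
    (hQoff : ∀ k l, k ≠ l → 0 < Q k l)
    (hQrow : ∀ k, ∑ l, Q k l = 0)
    (π : Fin n → ℝ)
    (hπ0 : ∀ k, 0 ≤ π k) (hπ1 : ∑ k, π k = 1)
    (hπQ : ∀ l, ∑ k, π k * Q k l = 0)
    (hfit : ∀ i : Fin m, i ≠ 0 → ∑ k, π k * w i k < ∑ k, π k * w 0 k) :
    ∃ (c : Fin m → Fin n → ℝ) (γ r : ℝ),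
      0 < γ ∧ γ < 1 ∧ 0 < r ∧ r < 1 ∧
      (∀ i : Fin m, i ≠ 0 → ∀ k,
        ∑ l, Q k l * c i l
          = (w i k - w 0 k) + (-(∑ k', π k' * (w i k' - w 0 k')))) ∧
      (∀ i : Fin m, i ≠ 0 → ∀ k, γ * c i k < 1) ∧
      (let V : (Fin m → ℝ) → Fin n → ℝ := fun P k =>
        ∑ i ∈ Finset.univ.erase 0, (1 - γ * c i k) * P i ^ γ
      let LV : (Fin m → ℝ) → Fin n → ℝ := fun P k =>
        (∑ i ∈ Finset.univ.erase 0,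
          γ * (1 - γ * c i k) * P i ^ γ *
            ((w i k - w 0 k) * (1 - P i)
              - ∑ j ∈ (Finset.univ.erase 0).erase i, (w j k - w 0 k) * P j))
        + ∑ l, Q k l * V P l
      (∀ k, Continuous (fun P => V P k)) ∧
      (∀ k, ∀ P : Fin m → ℝ, (∀ i, 0 ≤ P i) → 0 ≤ V P k) ∧
      (∀ k, ∀ P : Fin m → ℝ, (∀ i, 0 ≤ P i) → P 0 = 0 →
        (V P k = 0 ↔ P = 0)) ∧
      (∀ ρ : ℝ, 0 < ρ → ρ < r → ∃ κ : ℝ, 0 < κ ∧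
        ∀ k, ∀ P : Fin m → ℝ,
          (∀ i, 0 ≤ P i) → P 0 = 0 → (∑ i, P i) ≤ 1 →
          ρ ≤ ‖P‖ → ‖P‖ ≤ r → LV P k ≤ -κ)) := by
  classical
  -- notation
  set a : Fin m → Fin n → ℝ := fun i k => w i k - w 0 k with ha
  set β : Fin m → ℝ := fun i => -(∑ k, π k * a i k) with hβ
  -- solve Q c i = a i + β i 𝟙
  have hsolve : ∀ i : Fin m, ∃ ci : Fin n → ℝ,
      ∀ k, ∑ l, Q k l * ci l = a i k + β i := by
    intro i
    apply gen_surj hn Q hQoff hQrow π hπ1 hπQ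
    have : ∑ k, π k * (a i k + β i) = (∑ k, π k * a i k) + (∑ k, π k) * β i := by
      rw [Finset.sum_mul, ← Finset.sum_add_distrib]
      exact Finset.sum_congr rfl fun k _ => by ring
    rw [this, hπ1, hβ]; ring
  choose c hc using hsolve
  clear_value β
  clear_value a
  -- the simplex index set
  set S : Finset (Fin m) := Finset.univ.erase (0 : Fin m) with hSdef
  have hmemS : ∀ i : Fin m, i ∈ S ↔ i ≠ 0 := by
    intro i; simp [hSdef]
  have hS : S.Nonempty := by
    refine ⟨⟨1, by omega⟩, (hmemS _).mpr ?_⟩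
    intro h
    have := congrArg Fin.val h
    simp at this
  -- β is positive on S
  have hβpos : ∀ i ∈ S, 0 < β i := by
    intro i hi
    have hi0 := (hmemS i).mp hi
    have hlt := hfit i hi0
    have hsplit : ∑ k, π k * a i k
        = (∑ k, π k * w i k) - (∑ k, π k * w 0 k) := by
      rw [← Finset.sum_sub_distrib]
      refine Finset.sum_congr rfl fun k _ => by rw [ha]; ring
    rw [hβ]; simp only; rw [hsplit]; linarith
  obtain ⟨β₀, hβ₀def⟩ : ∃ x : ℝ, x = S.inf' hS β := ⟨_, rfl⟩
  have hβ₀pos : 0 < β₀ := by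
    rw [hβ₀def, Finset.lt_inf'_iff]
    exact hβpos
  have hβ₀le : ∀ i ∈ S, β₀ ≤ β i := by
    intro i hi; rw [hβ₀def]; exact Finset.inf'_le β hi
  -- bounds on a and c
  obtain ⟨A, hAdef⟩ : ∃ x : ℝ, x = (∑ i, ∑ k, |a i k|) + 1 := ⟨_, rfl⟩
  have hA1 : 1 ≤ A := by
    rw [hAdef]
    have : (0:ℝ) ≤ ∑ i, ∑ k, |a i k| :=
      Finset.sum_nonneg fun i _ => Finset.sum_nonneg fun k _ => abs_nonneg _
    linarith
  have hAbound : ∀ i k, |a i k| ≤ A := by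
    intro i k
    have h1 : |a i k| ≤ ∑ k', |a i k'| :=
      Finset.single_le_sum (f := fun k' => |a i k'|)
        (fun k' _ => abs_nonneg _) (mem_univ k)
    have h2 : (∑ k', |a i k'|) ≤ ∑ i', ∑ k', |a i' k'| :=
      Finset.single_le_sum (f := fun i' => ∑ k', |a i' k'|)
        (fun i' _ => Finset.sum_nonneg fun k' _ => abs_nonneg _) (mem_univ i)
    rw [hAdef]; linarith
  obtain ⟨C, hCdef⟩ : ∃ x : ℝ, x = (∑ i, ∑ k, |c i k|) + 1 := ⟨_, rfl⟩
  have hC1 : 1 ≤ C := by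
    rw [hCdef]
    have : (0:ℝ) ≤ ∑ i, ∑ k, |c i k| :=
      Finset.sum_nonneg fun i _ => Finset.sum_nonneg fun k _ => abs_nonneg _
    linarith
  have hCbound : ∀ i k, |c i k| ≤ C := by
    intro i k
    have h1 : |c i k| ≤ ∑ k', |c i k'| :=
      Finset.single_le_sum (f := fun k' => |c i k'|)
        (fun k' _ => abs_nonneg _) (mem_univ k)
    have h2 : (∑ k', |c i k'|) ≤ ∑ i', ∑ k', |c i' k'| :=
      Finset.single_le_sum (f := fun i' => ∑ k', |c i' k'|)
        (fun i' _ => Finset.sum_nonneg fun k' _ => abs_nonneg _) (mem_univ i)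
    rw [hCdef]; linarith
  have hC0 : (0:ℝ) < C := by linarith
  have hA0 : (0:ℝ) < A := by linarith
  -- the exponent and radius
  obtain ⟨γ, hγdef⟩ : ∃ x : ℝ, x = min (β₀ / (4 * (C * A))) (1 / (2 * C)) :=
    ⟨_, rfl⟩
  have hCA : 0 < C * A := by positivity
  have hγpos : 0 < γ := by
    rw [hγdef]
    apply lt_min <;> positivity
  have hγC : γ * C ≤ 1 / 2 := by
    have h1 : γ ≤ 1 / (2 * C) := by rw [hγdef]; exact min_le_right _ _
    calc γ * C ≤ (1 / (2 * C)) * C := mul_le_mul_of_nonneg_right h1 hC0.le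
      _ = 1 / 2 := by field_simp
  have hγCA : γ * (C * A) ≤ β₀ / 4 := by
    have h1 : γ ≤ β₀ / (4 * (C * A)) := by rw [hγdef]; exact min_le_left _ _
    calc γ * (C * A) ≤ (β₀ / (4 * (C * A))) * (C * A) :=
          mul_le_mul_of_nonneg_right h1 hCA.le
      _ = β₀ / 4 := by field_simp
  have hγ1 : γ < 1 := by
    have h := mul_le_mul_of_nonneg_left hC1 hγpos.le
    rw [mul_one] at h
    linarith
  have hγcb : ∀ i k, γ * c i k ≤ 1 / 2 := by
    intro i k
    have h1 : c i k ≤ |c i k| := le_abs_self _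
    have h2 : γ * c i k ≤ γ * C := by
      apply mul_le_mul_of_nonneg_left _ hγpos.le
      exact le_trans h1 (hCbound i k)
    linarith
  have hγcb' : ∀ i k, -(1/2 : ℝ) ≤ γ * c i k := by
    intro i k
    have h1 : -C ≤ c i k := by
      have h2 := hCbound i k
      have h3 := neg_abs_le (c i k)
      linarith
    have h2 : γ * (-C) ≤ γ * c i k := mul_le_mul_of_nonneg_left h1 hγpos.le
    nlinarith [hγC]
  have hm0 : (0:ℝ) < m := by positivity
  obtain ⟨r, hrdef⟩ : ∃ x : ℝ, x = min (1/2) (β₀ / (8 * A * m)) := ⟨_, rfl⟩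
  have hrpos : 0 < r := by
    rw [hrdef]
    apply lt_min
    · norm_num
    · positivity
  have hr12 : r ≤ 1/2 := by rw [hrdef]; exact min_le_left _ _
  have hr1 : r < 1 := by linarith
  have hrAm : 2 * (A * (m * r)) ≤ β₀ / 4 := by
    have h1 : r ≤ β₀ / (8 * A * m) := by rw [hrdef]; exact min_le_right _ _
    have hAm : (0:ℝ) < 8 * A * m := by positivity
    have h2 : r * (8 * A * m) ≤ β₀ := by
      rw [← le_div_iff₀ hAm]; exact h1
    nlinarith
  refine ⟨c, γ, r, hγpos, hγ1, hrpos, hr1, ?_, ?_, ?_⟩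
  · intro i hi k
    have h := hc i k
    rw [hβ] at h
    simp only at h
    rw [ha] at h
    exact h
  · intro i hi k
    have := hγcb i k
    linarith
  intro V LV
  have hγne : γ ≠ 0 := ne_of_gt hγpos
  have hcoef : ∀ i k, (1:ℝ)/2 ≤ 1 - γ * c i k := by
    intro i k
    have := hγcb i k
    linarith
  have hrpowcont : Continuous fun x : ℝ => x ^ γ := by
    rw [continuous_iff_continuousAt]
    intro x
    exact Real.continuousAt_rpow_const x γ (Or.inr hγpos.le)
  refine ⟨?_, ?_, ?_, ?_⟩
  · -- continuity
    intro k
    simp only [V]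
    apply continuous_finset_sum
    intro i _
    exact continuous_const.mul (hrpowcont.comp (continuous_apply i))
  · -- nonnegativity
    intro k P hP
    simp only [V]
    apply Finset.sum_nonneg
    intro i _
    have := hcoef i k
    have := Real.rpow_nonneg (hP i) γ
    nlinarith
  · -- vanishing iff zero
    intro k P hP hP0
    simp only [V]
    constructor
    · intro hV
      have hterms : ∀ i ∈ Finset.univ.erase (0 : Fin m),
          (1 - γ * c i k) * P i ^ γ = 0 := by
        rw [← Finset.sum_eq_zero_iff_of_nonneg]
        · exact hV
        · intro i _
          have := hcoef i k
          have := Real.rpow_nonneg (hP i) γ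
          nlinarith
      funext i
      rcases eq_or_ne i 0 with rfl | hi
      · exact hP0
      · have hti := hterms i (by simp [hi])
        have hco := hcoef i k
        have hpow : P i ^ γ = 0 := by
          rcases mul_eq_zero.mp hti with h' | h'
          · linarith
          · exact h'
        have := (Real.rpow_eq_zero (hP i) hγne).mp hpow
        simpa using this
    · intro h
      subst h
      simp [Real.zero_rpow hγne]
  · -- the Lyapunov estimate
    intro ρ hρ0 hρr
    refine ⟨γ * (β₀ / 2) * ρ ^ γ, by positivity, ?_⟩
    intro k P hP hP0 hPsum hρP hPr
    -- pointwise bounds on P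
    have hPle : ∀ j, P j ≤ r := by
      intro j
      have h1 : |P j| ≤ ‖P‖ := by
        simpa [Real.norm_eq_abs] using norm_le_pi_norm P j
      have := le_abs_self (P j)
      linarith
    obtain ⟨T, hTdef⟩ : ∃ x : ℝ, x = ∑ j ∈ S, a j k * P j := ⟨_, rfl⟩
    have hTbound : |T| ≤ A * (m * r) := by
      have h1 : |T| ≤ ∑ j ∈ S, |a j k * P j| := by
        rw [hTdef]; exact Finset.abs_sum_le_sum_abs _ _
      have h2 : ∀ j ∈ S, |a j k * P j| ≤ A * r := by
        intro j _
        rw [abs_mul, abs_of_nonneg (hP j)]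
        exact mul_le_mul (hAbound j k) (hPle j) (hP j) (by linarith)
      have h3 : ∑ j ∈ S, |a j k * P j| ≤ S.card * (A * r) := by
        calc ∑ j ∈ S, |a j k * P j| ≤ ∑ _j ∈ S, A * r := Finset.sum_le_sum h2
          _ = S.card * (A * r) := by rw [Finset.sum_const, nsmul_eq_mul]
      have hcard : (S.card : ℝ) ≤ m := by
        have h5 : S.card ≤ Finset.univ.card :=
          Finset.card_le_card (Finset.erase_subset _ _)
        have h4 : (Finset.univ : Finset (Fin m)).card = m := Finset.card_fin m
        exact_mod_cast le_trans h5 (le_of_eq h4)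
      have hAr : (0:ℝ) ≤ A * r := by positivity
      calc |T| ≤ S.card * (A * r) := le_trans h1 h3
        _ ≤ m * (A * r) := mul_le_mul_of_nonneg_right hcard hAr
        _ = A * (m * r) := by ring
    -- rewrite LV
    have hLV : LV P k = ∑ i ∈ S, γ * P i ^ γ *
        ((1 - γ * c i k) * (a i k - T) - (a i k + β i)) := by
      simp only [LV, V]
      have hfirst : ∀ i ∈ S,
          γ * (1 - γ * c i k) * P i ^ γ *
            ((w i k - w 0 k) * (1 - P i)
              - ∑ j ∈ S.erase i, (w j k - w 0 k) * P j)
          = γ * (1 - γ * c i k) * P i ^ γ * (a i k - T) := by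
        intro i hi
        congr 1
        have herase : (∑ j ∈ S.erase i, (w j k - w 0 k) * P j)
              + (w i k - w 0 k) * P i
            = ∑ j ∈ S, (w j k - w 0 k) * P j :=
          Finset.sum_erase_add S (fun j => (w j k - w 0 k) * P j) hi
        rw [hTdef]
        simp only [ha]
        linarith [herase]
      have hsecond : ∑ l, Q k l * (∑ i ∈ S, (1 - γ * c i l) * P i ^ γ)
          = ∑ i ∈ S, (-(γ * (a i k + β i))) * P i ^ γ := by
        have hswap : ∑ l, Q k l * (∑ i ∈ S, (1 - γ * c i l) * P i ^ γ)
            = ∑ i ∈ S, ∑ l, Q k l * ((1 - γ * c i l) * P i ^ γ) := by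
          rw [Finset.sum_comm]
          exact Finset.sum_congr rfl fun l _ => by rw [Finset.mul_sum]
        rw [hswap]
        refine Finset.sum_congr rfl fun i _ => ?_
        have hptwise : ∀ l, Q k l * ((1 - γ * c i l) * P i ^ γ)
            = Q k l * P i ^ γ - γ * (Q k l * c i l * P i ^ γ) := fun l => by ring
        have hinner : ∑ l, Q k l * ((1 - γ * c i l) * P i ^ γ)
            = (∑ l, Q k l) * P i ^ γ
              - γ * ((∑ l, Q k l * c i l) * P i ^ γ) := by
          rw [Finset.sum_congr rfl fun l _ => hptwise l, Finset.sum_sub_distrib,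
            ← Finset.sum_mul, ← Finset.mul_sum, ← Finset.sum_mul]
        rw [hinner, hQrow k, hc i k]
        ring
      rw [Finset.sum_congr rfl hfirst, hsecond, ← Finset.sum_add_distrib]
      exact Finset.sum_congr rfl fun i _ => by ring
    -- bound each bracket
    have hbracket : ∀ i ∈ S,
        (1 - γ * c i k) * (a i k - T) - (a i k + β i) ≤ -(β₀ / 2) := by
      intro i hi
      have heq : (1 - γ * c i k) * (a i k - T) - (a i k + β i)
          = -(γ * c i k * a i k) - β i - (1 - γ * c i k) * T := by ring
      have hb1 : -(γ * c i k * a i k) ≤ β₀ / 4 := by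
        have habs : |γ * c i k * a i k| ≤ γ * (C * A) := by
          rw [abs_mul, abs_mul, abs_of_nonneg hγpos.le, mul_assoc]
          apply mul_le_mul_of_nonneg_left _ hγpos.le
          exact mul_le_mul (hCbound i k) (hAbound i k) (abs_nonneg _) hC0.le
        have := neg_le_abs (γ * c i k * a i k)
        linarith [hγCA]
      have hb2 : -((1 - γ * c i k) * T) ≤ β₀ / 4 := by
        have habs : |(1 - γ * c i k) * T| ≤ 2 * (A * (m * r)) := by
          rw [abs_mul]
          have h1 : |1 - γ * c i k| ≤ 2 := by
            have e1 := hγcb i k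
            have e2 := hγcb' i k
            rw [abs_le]; constructor <;> linarith
          exact mul_le_mul h1 hTbound (abs_nonneg _) (by norm_num)
        have := neg_le_abs ((1 - γ * c i k) * T)
        linarith [hrAm]
      have := hβ₀le i hi
      rw [heq]; linarith
    have hterm : ∀ i ∈ S, γ * P i ^ γ *
        ((1 - γ * c i k) * (a i k - T) - (a i k + β i))
        ≤ γ * P i ^ γ * (-(β₀ / 2)) := by
      intro i hi
      exact mul_le_mul_of_nonneg_left (hbracket i hi)
        (mul_nonneg hγpos.le (Real.rpow_nonneg (hP i) γ))
    -- lower bound on ∑ P_i^γ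
    obtain ⟨i₁, hi₁⟩ : ∃ i, ρ ≤ |P i| := by
      by_contra h
      push_neg at h
      have : ‖P‖ < ρ := (pi_norm_lt_iff hρ0).mpr fun i => by
        simpa [Real.norm_eq_abs] using h i
      linarith
    have hi₁0 : i₁ ≠ 0 := by
      intro h
      rw [h, hP0] at hi₁
      simp at hi₁
      linarith
    have hi₁S : i₁ ∈ S := (hmemS i₁).mpr hi₁0
    have hρPi : ρ ≤ P i₁ := by
      rwa [abs_of_nonneg (hP i₁)] at hi₁
    have hsumpow : ρ ^ γ ≤ ∑ i ∈ S, P i ^ γ := by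
      calc ρ ^ γ ≤ P i₁ ^ γ := Real.rpow_le_rpow hρ0.le hρPi hγpos.le
        _ ≤ ∑ i ∈ S, P i ^ γ :=
          Finset.single_le_sum (f := fun i => P i ^ γ)
            (fun i _ => Real.rpow_nonneg (hP i) γ) hi₁S
    have hfac : 0 ≤ γ * (β₀ / 2) := by positivity
    calc LV P k = ∑ i ∈ S, γ * P i ^ γ *
          ((1 - γ * c i k) * (a i k - T) - (a i k + β i)) := hLV
      _ ≤ ∑ i ∈ S, γ * P i ^ γ * (-(β₀ / 2)) := Finset.sum_le_sum hterm
      _ = -(γ * (β₀ / 2)) * ∑ i ∈ S, P i ^ γ := by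
          rw [Finset.mul_sum]
          exact Finset.sum_congr rfl fun i _ => by ring
      _ ≤ -(γ * (β₀ / 2)) * ρ ^ γ := by
          have := mul_le_mul_of_nonneg_left hsumpow hfac
          linarith
      _ = -(γ * (β₀ / 2) * ρ ^ γ) := by ring
end

section
/- (Lyapunov function for Theorem 3.4, instability in probability of the non-fittest genotypes.) Let m ≥ 2, n ≥ 1, let w_i^k ∈ ℝ (1 ≤ i ≤ m, 1 ≤ k ≤ n) be fitness values, let Q = (q_{kl}) be an n×n irreducible generator matrix with stationary distribution π, fix i ∈ {2, …, m}, and assume π·w_1 > π·w_i, where w_j = (w_j^1, …, w_j^n). Set a_{l,i}^k = w_l^k − w_i^k for l ≠ i and β = Σ_{k=1}^n π_k a_{1,i}^k (so β > 0). Then there exist a vector c ∈ ℝ^n with Q c = a_{1,i} − β (1, …, 1), a number γ ∈ (−1, 0) with γ c^k < 1 for all k, and a radius r ∈ (0, 1) such that, defining V(P, k) = (1 − γ c^k) P_1^γ for P = (P_l)_{l ≠ i} with P_1 > 0, the following hold: (i) V(P, k) > 0 for all such P and all k; (ii) for each k, V(P, k) → ∞ as P_1 → 0+; and (iii) for every ρ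 ∈ (0, r) there exists κ > 0 such that ℒV(P, k) := F_1(P, k) ∂V/∂P_1(P, k) + Σ_{l=1}^n q_{kl} V(P, l) ≤ −κ for every k ∈ {1, …, n} and every P with P_l ≥ 0 for all l ≠ i, P_1 > 0, Σ_{l ≠ i} P_l ≤ 1, and ρ ≤ |P| ≤ r. -/
open Finset

private lemma gen_ker (n : ℕ) (hn : 1 ≤ n) (Q : Matrix (Fin n) (Fin n) ℝ)
    (hQoff : ∀ k l, k ≠ l → 0 < Q k l) (hQrow : ∀ k, ∑ l, Q k l = 0)
    (c : Fin n → ℝ) (hc : Q.mulVec c = 0) : ∃ t : ℝ, c = fun _ => t := by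
  have hne : (Finset.univ : Finset (Fin n)).Nonempty := ⟨⟨0, hn⟩, Finset.mem_univ _⟩
  obtain ⟨k₀, -, hk₀⟩ := Finset.exists_max_image Finset.univ c hne
  refine ⟨c k₀, funext fun l => ?_⟩
  have h1 : ∑ l, Q k₀ l * c l = 0 := by
    have := congrFun hc k₀
    simpa [Matrix.mulVec, dotProduct] using this
  have h0 : ∑ l, Q k₀ l * (c l - c k₀) = 0 := by
    have h2 := hQrow k₀
    have : ∑ l, Q k₀ l * (c l - c k₀)
        = (∑ l, Q k₀ l * c l) - (∑ l, Q k₀ l) * c k₀ := by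
      rw [Finset.sum_mul, ← Finset.sum_sub_distrib]; exact Finset.sum_congr rfl fun l _ => by ring
    rw [this, h1, h2]; ring
  have hnp : ∀ l ∈ Finset.univ, Q k₀ l * (c l - c k₀) ≤ 0 := by
    intro l _
    rcases eq_or_ne l k₀ with rfl | hl
    · simp
    · exact mul_nonpos_of_nonneg_of_nonpos (hQoff k₀ l (Ne.symm hl)).le
        (by linarith [hk₀ l (Finset.mem_univ l)])
  have := (Finset.sum_eq_zero_iff_of_nonpos hnp).mp h0 l (Finset.mem_univ l)
  rcases eq_or_ne l k₀ with rfl | hl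
  · rfl
  · have hQ := hQoff k₀ l (Ne.symm hl)
    have : c l - c k₀ = 0 := by
      rcases mul_eq_zero.mp this with h | h
      · exact absurd h hQ.ne'
      · exact h
    linarith

private lemma exists_c (n : ℕ) (hn : 1 ≤ n) (Q : Matrix (Fin n) (Fin n) ℝ)
    (hQoff : ∀ k l, k ≠ l → 0 < Q k l) (hQrow : ∀ k, ∑ l, Q k l = 0)
    (π : Fin n → ℝ) (hπ1 : ∑ k, π k = 1)
    (hπQ : ∀ l, ∑ k, π k * Q k l = 0)
    (f : Fin n → ℝ) (hf : ∑ k, π k * f k = 0) :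
    ∃ c : Fin n → ℝ, ∀ k, ∑ l, Q k l * c l = f k := by
  set T := Q.mulVecLin with hT
  set φ : (Fin n → ℝ) →ₗ[ℝ] ℝ :=
    { toFun := fun g => ∑ k, π k * g k
      map_add' := by intro a b; simp [mul_add, Finset.sum_add_distrib]
      map_smul' := by
        intro a b
        simp only [Pi.smul_apply, smul_eq_mul, RingHom.id_apply, Finset.mul_sum]
        exact Finset.sum_congr rfl fun k _ => by ring } with hφ
  have hone : ((fun _ => 1 : Fin n → ℝ)) ≠ 0 := by
    intro h
    have := congrFun h ⟨0, hn⟩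
    simpa using this
  have hker : LinearMap.ker T = Submodule.span ℝ {(fun _ => 1 : Fin n → ℝ)} := by
    ext c
    rw [LinearMap.mem_ker, Submodule.mem_span_singleton]
    constructor
    · intro h
      obtain ⟨t, rfl⟩ := gen_ker n hn Q hQoff hQrow c (by simpa [hT] using h)
      exact ⟨t, by funext k; simp⟩
    · rintro ⟨a, rfl⟩
      have h0 : Q.mulVec (a • fun _ => (1:ℝ)) = 0 := by
        funext k
        simp only [Matrix.mulVec, dotProduct, Pi.smul_apply, smul_eq_mul,
          mul_one, Pi.zero_apply]
        rw [← Finset.sum_mul, hQrow k, zero_mul]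
      show Q.mulVecLin (a • fun _ => (1:ℝ)) = 0
      rw [Matrix.mulVecLin_apply]; exact h0
  have hkerdim : Module.finrank ℝ (LinearMap.ker T) = 1 := by
    rw [hker, finrank_span_singleton hone]
  have hrank := LinearMap.finrank_range_add_finrank_ker T
  have hdim : Module.finrank ℝ (Fin n → ℝ) = n := by simp
  have hrangedim : Module.finrank ℝ (LinearMap.range T) = n - 1 := by omega
  have hφone : φ (fun _ => 1) = 1 := by simpa [hφ] using hπ1
  have hφne : φ ≠ 0 := by
    intro h; rw [h] at hφone; simpa using hφone
  have hφrange : Module.finrank ℝ (LinearMap.range φ) = 1 := by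
    have hle : Module.finrank ℝ (LinearMap.range φ) ≤ 1 := by
      simpa using Submodule.finrank_le (LinearMap.range φ)
    have hpos : 0 < Module.finrank ℝ (LinearMap.range φ) := by
      rw [Module.finrank_pos_iff]
      refine Submodule.nontrivial_iff_ne_bot.mpr ?_
      intro h
      exact hφne (LinearMap.range_eq_bot.mp h)
    omega
  have hrφ := LinearMap.finrank_range_add_finrank_ker φ
  have hφker : Module.finrank ℝ (LinearMap.ker φ) = n - 1 := by omega
  have hle : LinearMap.range T ≤ LinearMap.ker φ := by
    rintro x ⟨c, rfl⟩
    rw [LinearMap.mem_ker]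
    show ∑ k, π k * (Q.mulVec c) k = 0
    simp only [Matrix.mulVec, dotProduct, Finset.mul_sum]
    rw [Finset.sum_comm]
    refine Finset.sum_eq_zero fun l _ => ?_
    have : ∑ k, π k * (Q k l * c l) = (∑ k, π k * Q k l) * c l := by
      rw [Finset.sum_mul]; exact Finset.sum_congr rfl fun k _ => by ring
    rw [this, hπQ l, zero_mul]
  have heq : LinearMap.range T = LinearMap.ker φ :=
    Submodule.eq_of_le_of_finrank_eq hle (by rw [hrangedim, hφker])
  have hfmem : f ∈ LinearMap.ker φ := by rw [LinearMap.mem_ker]; exact hf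
  rw [← heq] at hfmem
  obtain ⟨c, hc⟩ := hfmem
  refine ⟨c, fun k => ?_⟩
  have := congrFun hc k
  simpa [hT, Matrix.mulVecLin_apply, Matrix.mulVec, dotProduct] using this

set_option maxHeartbeats 2000000 in
/-- Lyapunov function for Theorem 3.4: fix a genotype `i ≠ 0` (i.e. one of
the genotypes `2, …, m`) whose mean fitness is strictly smaller than that of genotype `1`
(index `0`) with respect to the stationary distribution `π` of the irreducible generator
matrix `Q`. With `a l k = w l k - w i k` and `β = ∑ k, π k * a 0 k > 0`, there are a
vector `c` with `Q c = a 0 - β 𝟙`, an exponent `γ ∈ (-1, 0)` with `γ c k < 1`, and a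
radius `r ∈ (0,1)` such that the function `V P k = (1 - γ c k) * P 0 ^ γ` (in reduced
coordinates, where `P i` is eliminated) is positive, blows up as `P 0 → 0+`, and its
stochastic Lie derivative `ℒV(P,k) = F_0(P,k) ∂V/∂P_0 + ∑ l, q k l * V(P,l)` along the
reduced replicator vector field satisfies `ℒV(P, k) ≤ -κ(ρ)` on every annulus
`ρ ≤ |P| ≤ r` inside the reduced simplex. -/
theorem lyapunov_for_instability_in_probability
    (m n : ℕ) [NeZero m] (hm : 2 ≤ m) (hn : 1 ≤ n)
    (w : Fin m → Fin n → ℝ)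
    (Q : Matrix (Fin n) (Fin n) ℝ)
    (hQoff : ∀ k l, k ≠ l → 0 < Q k l)
    (hQrow : ∀ k, ∑ l, Q k l = 0)
    (π : Fin n → ℝ)
    (hπ0 : ∀ k, 0 ≤ π k) (hπ1 : ∑ k, π k = 1)
    (hπQ : ∀ l, ∑ k, π k * Q k l = 0)
    (i : Fin m) (hi : i ≠ 0)
    (hfit : ∑ k, π k * w i k < ∑ k, π k * w 0 k) :
    ∃ (c : Fin n → ℝ) (γ r : ℝ),
      -1 < γ ∧ γ < 0 ∧ 0 < r ∧ r < 1 ∧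
      (∀ k, ∑ l, Q k l * c l
        = (w 0 k - w i k) - (∑ k', π k' * (w 0 k' - w i k'))) ∧
      (∀ k, γ * c k < 1) ∧
      (let V : (Fin m → ℝ) → Fin n → ℝ := fun P k =>
        (1 - γ * c k) * P 0 ^ γ
      let LV : (Fin m → ℝ) → Fin n → ℝ := fun P k =>
        ((w 0 k - w i k) * P 0 * (1 - P 0)
            - P 0 * ∑ j ∈ (Finset.univ.erase i).erase 0, (w j k - w i k) * P j)
          * (γ * (1 - γ * c k) * P 0 ^ (γ - 1))
        + ∑ l, Q k l * V P l
      (∀ k, ∀ P : Fin m → ℝ, 0 < P 0 → 0 < V P k) ∧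
      (∀ k, Filter.Tendsto (fun x : ℝ => (1 - γ * c k) * x ^ γ)
        (nhdsWithin 0 (Set.Ioi 0)) Filter.atTop) ∧
      (∀ ρ : ℝ, 0 < ρ → ρ < r → ∃ κ : ℝ, 0 < κ ∧
        ∀ k, ∀ P : Fin m → ℝ,
          (∀ l, l ≠ i → 0 ≤ P l) → P i = 0 → 0 < P 0 →
          (∑ l ∈ Finset.univ.erase i, P l) ≤ 1 →
          ρ ≤ ‖P‖ → ‖P‖ ≤ r → LV P k ≤ -κ)) := by
  classical
  set β := ∑ k', π k' * (w 0 k' - w i k') with hβdef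
  have hβ : 0 < β := by
    have h : β = (∑ k, π k * w 0 k) - ∑ k, π k * w i k := by
      rw [hβdef, ← Finset.sum_sub_distrib]
      exact Finset.sum_congr rfl fun k _ => by ring
    rw [h]; linarith
  have hf : ∑ k, π k * ((w 0 k - w i k) - β) = 0 := by
    have h : ∑ k, π k * ((w 0 k - w i k) - β)
        = (∑ k, π k * (w 0 k - w i k)) - (∑ k, π k) * β := by
      rw [Finset.sum_mul, ← Finset.sum_sub_distrib]
      exact Finset.sum_congr rfl fun k _ => by ring
    rw [h, hπ1, ← hβdef]; ring
  obtain ⟨c, hc⟩ := exists_c n hn Q hQoff hQrow π hπ1 hπQ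
    (fun k => (w 0 k - w i k) - β) hf
  obtain ⟨A, hA1, hAb⟩ : ∃ A : ℝ, 1 ≤ A ∧ ∀ j k, |w j k - w i k| ≤ A := by
    refine ⟨1 + ∑ j, ∑ k, |w j k - w i k|, ?_, ?_⟩
    · have : (0:ℝ) ≤ ∑ j, ∑ k, |w j k - w i k| :=
        Finset.sum_nonneg fun j _ => Finset.sum_nonneg fun k _ => abs_nonneg _
      linarith
    · intro j k
      have h1 : |w j k - w i k| ≤ ∑ k', |w j k' - w i k'| :=
        Finset.single_le_sum (f := fun k' => |w j k' - w i k'|)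
          (fun _ _ => abs_nonneg _) (mem_univ k)
      have h2 : ∑ k', |w j k' - w i k'| ≤ ∑ j', ∑ k', |w j' k' - w i k'| :=
        Finset.single_le_sum (f := fun j' => ∑ k', |w j' k' - w i k'|)
          (fun j' _ => Finset.sum_nonneg fun k' _ => abs_nonneg _)
          (mem_univ j)
      linarith
  obtain ⟨C, hC1, hCb⟩ : ∃ C : ℝ, 1 ≤ C ∧ ∀ k, |c k| ≤ C := by
    refine ⟨1 + ∑ k, |c k|, ?_, ?_⟩
    · have : (0:ℝ) ≤ ∑ k, |c k| := Finset.sum_nonneg fun k _ => abs_nonneg _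
      linarith
    · intro k
      have h1 : |c k| ≤ ∑ k', |c k'| :=
        Finset.single_le_sum (f := fun k' => |c k'|)
          (fun _ _ => abs_nonneg _) (mem_univ k)
      linarith
  have hβA : β ≤ A := by
    have h : β ≤ ∑ k, π k * A := by
      rw [hβdef]
      refine Finset.sum_le_sum fun k _ => ?_
      exact mul_le_mul_of_nonneg_left ((le_abs_self _).trans (hAb 0 k)) (hπ0 k)
    rw [← Finset.sum_mul, hπ1, one_mul] at h
    exact h
  have hmR : (2:ℝ) ≤ (m:ℝ) := by exact_mod_cast hm
  have hD : (0:ℝ) < β + 4*C*A := by nlinarith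
  have hD' : (0:ℝ) < β + 8*A*(m:ℝ) := by nlinarith
  set γ : ℝ := -(β / (β + 4*C*A)) with hγdef
  set r : ℝ := β / (β + 8*A*(m:ℝ)) with hrdef
  have hγ0 : γ < 0 := by
    rw [hγdef]; simp only [neg_neg, neg_lt_zero]; positivity
  have hγ1 : -1 < γ := by
    have h : β / (β + 4*C*A) < 1 := (div_lt_one hD).mpr (by nlinarith)
    rw [hγdef]; linarith
  have hr0 : 0 < r := by rw [hrdef]; positivity
  have hr1 : r < 1 := by
    rw [hrdef, div_lt_one hD']; nlinarith
  have hγabs : |γ| = β / (β + 4*C*A) := by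
    rw [hγdef, abs_neg, abs_of_nonneg (by positivity)]
  have key1 : ∀ k, |γ * c k| ≤ 1/4 := by
    intro k
    rw [abs_mul, hγabs]
    calc β / (β + 4*C*A) * |c k| ≤ β / (β + 4*C*A) * C :=
          mul_le_mul_of_nonneg_left (hCb k) (by positivity)
      _ ≤ 1/4 := by
          rw [div_mul_eq_mul_div, div_le_iff₀ hD]
          nlinarith [mul_le_mul_of_nonneg_left hβA (by linarith : (0:ℝ) ≤ C)]
  have key2 : ∀ k, |γ * (c k * (w 0 k - w i k))| ≤ β/4 := by
    intro k
    rw [abs_mul, hγabs, abs_mul]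
    calc β / (β + 4*C*A) * (|c k| * |w 0 k - w i k|)
        ≤ β / (β + 4*C*A) * (C * A) := by
          refine mul_le_mul_of_nonneg_left ?_ (by positivity)
          exact mul_le_mul (hCb k) (hAb 0 k) (abs_nonneg _) (by linarith)
      _ ≤ β/4 := by
          rw [div_mul_eq_mul_div, div_le_iff₀ hD]
          nlinarith [sq_nonneg β,
            mul_pos (by linarith : (0:ℝ) < C) (by linarith : (0:ℝ) < A)]
  have key3 : (m:ℝ) * (A * r) ≤ β/8 := by
    have h : (m:ℝ) * (A * r) = ((m:ℝ)*A*β)/(β + 8*A*(m:ℝ)) := by rw [hrdef]; ring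
    rw [h, div_le_div_iff₀ hD' (by norm_num : (0:ℝ) < 8)]
    nlinarith [sq_nonneg β,
      mul_pos (by linarith : (0:ℝ) < A) (by linarith : (0:ℝ) < (m:ℝ))]
  have hγck : ∀ k, γ * c k < 1 := fun k =>
    lt_of_le_of_lt ((le_abs_self _).trans (key1 k)) (by norm_num)
  have h34 : ∀ k, (3:ℝ)/4 ≤ 1 - γ * c k := by
    intro k
    have := key1 k
    rw [abs_le] at this
    linarith [this.2]
  clear hγabs hγdef hrdef hβdef
  clear_value β γ r
  refine ⟨c, γ, r, hγ1, hγ0, hr0, hr1, fun k => hc k, hγck, ?_⟩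
  intro V LV
  refine ⟨?_, ?_, ?_⟩
  · -- positivity of V
    intro k P hP
    show 0 < (1 - γ * c k) * P 0 ^ γ
    exact mul_pos (by linarith [h34 k]) (Real.rpow_pos_of_pos hP γ)
  · -- blow-up
    intro k
    have h1 : Filter.Tendsto (fun x : ℝ => x ^ γ) (nhdsWithin 0 (Set.Ioi 0))
        Filter.atTop := by
      have h2 := (tendsto_rpow_atTop (by linarith : 0 < -γ)).comp
        tendsto_inv_nhdsGT_zero
      refine h2.congr' ?_
      filter_upwards [self_mem_nhdsWithin] with x hx
      have hx0 : (0:ℝ) < x := hx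
      simp only [Function.comp_apply]
      rw [Real.inv_rpow hx0.le, ← Real.rpow_neg hx0.le, neg_neg]
    exact h1.const_mul_atTop (by linarith [h34 k])
  · -- Lie derivative bound
    intro ρ hρ0 hρr
    have hκpos : (0:ℝ) < -(γ * (β/2)) := by
      nlinarith [mul_neg_of_neg_of_pos hγ0 (by linarith : (0:ℝ) < β/2)]
    refine ⟨-(γ * (β/2)), hκpos, ?_⟩
    intro k P hPnn hPi hP0 hPsum hρP hPr
    rw [neg_neg]
    show ((w 0 k - w i k) * P 0 * (1 - P 0)
            - P 0 * ∑ j ∈ (Finset.univ.erase i).erase 0, (w j k - w i k) * P j)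
          * (γ * (1 - γ * c k) * P 0 ^ (γ - 1))
        + ∑ l, Q k l * ((1 - γ * c l) * P 0 ^ γ) ≤ γ * (β/2)
    have hp0 : (0:ℝ) < P 0 := hP0
    have hPabs : ∀ l, |P l| ≤ r := by
      intro l
      refine le_trans ?_ hPr
      rw [← Real.norm_eq_abs]
      exact norm_le_pi_norm P l
    have hp_le : P 0 ≤ r := (le_abs_self _).trans (hPabs 0)
    set a0 : ℝ := w 0 k - w i k with ha0
    set S : ℝ := ∑ j ∈ (Finset.univ.erase i).erase 0, (w j k - w i k) * P j with hSdef
    set X : ℝ := P 0 ^ γ with hX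
    set Y : ℝ := P 0 ^ (γ - 1) with hY
    have hXY : Y * P 0 = X := by
      rw [hY, hX, Real.rpow_sub_one hp0.ne']
      field_simp
    have hsum2 : ∑ l, Q k l * ((1 - γ * c l) * X) = (0 - γ * (a0 - β)) * X := by
      have e0 : ∑ l, Q k l * ((1 - γ * c l) * X)
          = (∑ l, Q k l * (1 - γ * c l)) * X := by
        rw [Finset.sum_mul]; exact Finset.sum_congr rfl fun l _ => by ring
      have e1 : ∑ l, Q k l * (1 - γ * c l)
          = (∑ l, Q k l) - γ * ∑ l, Q k l * c l := by
        rw [Finset.mul_sum, ← Finset.sum_sub_distrib]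
        exact Finset.sum_congr rfl fun l _ => by ring
      rw [e0, e1, hQrow k, hc k]
    set B : ℝ := (1 - γ * c k) * (a0 * (1 - P 0) - S) - (a0 - β) with hB
    have hiden : (a0 * P 0 * (1 - P 0) - P 0 * S) * (γ * (1 - γ * c k) * Y)
        + ∑ l, Q k l * ((1 - γ * c l) * X) = X * (γ * B) := by
      rw [hsum2, hB]
      linear_combination (γ * (1 - γ * c k) * (a0 * (1 - P 0) - S)) * hXY
    rw [hiden]
    -- bound |a0 * P 0 + S|
    have hmem0 : (0 : Fin m) ∈ Finset.univ.erase i :=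
      Finset.mem_erase.mpr ⟨Ne.symm hi, Finset.mem_univ _⟩
    have hu : |a0 * P 0 + S| ≤ β/8 := by
      have he : a0 * P 0 + S = ∑ l ∈ Finset.univ.erase i, (w l k - w i k) * P l := by
        rw [hSdef, ha0]
        exact Finset.add_sum_erase _ (fun l => (w l k - w i k) * P l) hmem0
      rw [he]
      have hcard : ((Finset.univ.erase i).card : ℝ) ≤ (m:ℝ) := by
        have : (Finset.univ.erase i).card ≤ m := by
          rw [Finset.card_erase_of_mem (Finset.mem_univ i), Finset.card_univ,
            Fintype.card_fin]
          omega
        exact_mod_cast this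
      calc |∑ l ∈ Finset.univ.erase i, (w l k - w i k) * P l|
          ≤ ∑ l ∈ Finset.univ.erase i, |(w l k - w i k) * P l| :=
            Finset.abs_sum_le_sum_abs _ _
        _ ≤ ∑ _l ∈ Finset.univ.erase i, A * r :=
            Finset.sum_le_sum fun l _ => by
              rw [abs_mul]
              exact mul_le_mul (hAb l k) (hPabs l) (abs_nonneg _) (by linarith)
        _ = ((Finset.univ.erase i).card : ℝ) * (A * r) := by
            rw [Finset.sum_const, nsmul_eq_mul]
        _ ≤ (m:ℝ) * (A * r) :=
            mul_le_mul_of_nonneg_right hcard (by positivity)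
        _ ≤ β/8 := key3
    rw [abs_le] at hu
    have hgk := key1 k
    rw [abs_le] at hgk
    have hga := key2 k
    rw [abs_le] at hga
    have hBge : β/2 ≤ B := by
      rw [hB]
      nlinarith [hu.1, hu.2, hgk.1, hgk.2, hga.1, hga.2, hβ]
    have hX1 : 1 ≤ X := by
      rw [hX]
      have hp1 : P 0 ≤ 1 := le_trans hp_le (le_of_lt hr1)
      have := Real.rpow_le_rpow_of_exponent_ge hp0 hp1 hγ0.le
      simpa using this
    have hγB : γ * B ≤ γ * (β/2) := by
      nlinarith [mul_nonneg (neg_nonneg.mpr hγ0.le) (by linarith : (0:ℝ) ≤ B - β/2)]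
    have hneg : γ * B ≤ 0 :=
      le_trans hγB (mul_nonpos_of_nonpos_of_nonneg hγ0.le (by linarith))
    calc X * (γ * B) ≤ 1 * (γ * B) := by
          nlinarith [mul_nonpos_of_nonneg_of_nonpos
            (by linarith : (0:ℝ) ≤ X - 1) hneg]
      _ = γ * B := one_mul _
      _ ≤ γ * (β/2) := hγB
end

section
/- Let m ≥ 1, let w_1, …, w_m ∈ ℝ, and let p ∈ T^{m−1}. If P and P̃ are two solutions of the replicator equation defined on ℝ with P(0) = P̃(0) = p, then P(t) = P̃(t) for all t ∈ ℝ; in particular, the unique solution with initial value p is given by P_i(t) = p_i e^{w_i t} / (Σ_{j=1}^m p_j e^{w_j t}). -/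
lemma replicator_sol
    (m : ℕ) (w : Fin m → ℝ) (p : Fin m → ℝ)
    (hp2 : ∑ i, p i = 1)
    (P : ℝ → Fin m → ℝ) (hP0 : P 0 = p)
    (hode : ∀ t : ℝ, ∀ i,
      HasDerivAt (fun s => P s i) (P t i * (w i - ∑ j, w j * P t j)) t) :
    ∀ t : ℝ, ∀ i,
      P t i = p i * Real.exp (w i * t) / ∑ j, p j * Real.exp (w j * t) := by
  set A : ℝ → ℝ := fun t => ∑ j, w j * P t j with hA
  have hcontP : ∀ j, Continuous (fun t => P t j) := fun j =>
    continuous_iff_continuousAt.2 fun t => (hode t j).differentiableAt.continuousAt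
  have hcontA : Continuous A := by
    apply continuous_finset_sum
    exact fun j _ => continuous_const.mul (hcontP j)
  set B : ℝ → ℝ := fun t => ∫ s in (0:ℝ)..t, A s with hBdef
  have hB : ∀ t, HasDerivAt B (A t) t := fun t =>
    intervalIntegral.integral_hasDerivAt_right (hcontA.intervalIntegrable _ _)
      (hcontA.stronglyMeasurableAtFilter _ _) hcontA.continuousAt
  have hB0 : B 0 = 0 := intervalIntegral.integral_same
  -- Step 1
  have step1 : ∀ t i, P t i = p i * Real.exp (w i * t - B t) := by
    intro t i
    set f : ℝ → ℝ := fun s => P s i * Real.exp (B s - w i * s) with hf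
    have hf' : ∀ s, HasDerivAt f 0 s := by
      intro s
      have hlin : HasDerivAt (fun u : ℝ => w i * u) (w i) s := by
        simpa using (hasDerivAt_id s).const_mul (w i)
      have hexp := (((hB s).sub hlin).exp)
      have := (hode s i).mul hexp
      refine this.congr_deriv ?_
      ring
    have hconst : f t = f 0 :=
      is_const_of_deriv_eq_zero (fun s => (hf' s).differentiableAt)
        (fun s => (hf' s).deriv) t 0
    have hf0 : f 0 = p i := by
      simp [hf, hP0, hB0]
    have hft : P t i * Real.exp (B t - w i * t) = p i := by
      rw [← hf0]; exact hconst
    have hne : Real.exp (B t - w i * t) ≠ 0 := Real.exp_ne_zero _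
    field_simp [Real.exp_sub] at hft ⊢
    rw [← hft, mul_assoc, ← Real.exp_add, show B t - w i * t + (w i * t - B t) = 0 by ring,
      Real.exp_zero, mul_one]
  -- Step 2: exp (B t) = G t
  set G : ℝ → ℝ := fun t => ∑ j, p j * Real.exp (w j * t) with hGdef
  have hG' : ∀ t, HasDerivAt G (∑ j, w j * (p j * Real.exp (w j * t))) t := by
    intro t
    have : HasDerivAt G (∑ j, p j * (Real.exp (w j * t) * w j)) t := by
      apply HasDerivAt.fun_sum
      intro j _
      have hlin : HasDerivAt (fun u : ℝ => w j * u) (w j) t := by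
        simpa using (hasDerivAt_id t).const_mul (w j)
      simpa using (hlin.exp.const_mul (p j))
    convert this using 1
    apply Finset.sum_congr rfl
    intro j _
    ring
  have step2 : ∀ t, Real.exp (B t) = G t := by
    intro t
    set H : ℝ → ℝ := fun s => Real.exp (B s) - G s with hH
    have hH' : ∀ s, HasDerivAt H 0 s := by
      intro s
      have h1 := ((hB s).exp).sub (hG' s)
      have key : Real.exp (B s) * A s - (∑ j, w j * (p j * Real.exp (w j * s))) = 0 := by
        rw [hA]
        simp only
        rw [Finset.mul_sum, ← Finset.sum_sub_distrib]
        apply Finset.sum_eq_zero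
        intro j _
        rw [step1 s j, Real.exp_sub]
        have := Real.exp_ne_zero (B s)
        field_simp
        ring
      rw [← key]
      exact h1
    have hconst : H t = H 0 :=
      is_const_of_deriv_eq_zero (fun s => (hH' s).differentiableAt)
        (fun s => (hH' s).deriv) t 0
    have hH0 : H 0 = 0 := by
      simp [hH, hGdef, hB0, hp2]
    have : H t = 0 := hconst.trans hH0
    have := this
    simp only [hH] at this
    linarith
  intro t i
  rw [step1 t i, Real.exp_sub, step2 t]
  simp only [hGdef]
  ring

/-- Uniqueness of solutions of the replicator equation. If `P` and `P̃`
are two solutions on `ℝ` with the same initial value `p` in the simplex, then they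
coincide for all times, and the unique solution is given by the explicit formula
`P i t = p i * exp (w i * t) / ∑ j, p j * exp (w j * t)`. -/
theorem replicator_uniqueness
    (m : ℕ) (hm : 1 ≤ m) (w : Fin m → ℝ) (p : Fin m → ℝ)
    (hp : (∀ i, 0 ≤ p i) ∧ ∑ i, p i = 1)
    (P Ptilde : ℝ → Fin m → ℝ)
    (hP0 : P 0 = p) (hPtilde0 : Ptilde 0 = p)
    (hode : ∀ t : ℝ, ∀ i,
      HasDerivAt (fun s => P s i) (P t i * (w i - ∑ j, w j * P t j)) t)
    (hodetilde : ∀ t : ℝ, ∀ i,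
      HasDerivAt (fun s => Ptilde s i) (Ptilde t i * (w i - ∑ j, w j * Ptilde t j)) t) :
    (∀ t : ℝ, P t = Ptilde t) ∧
    (∀ t : ℝ, ∀ i,
      P t i = p i * Real.exp (w i * t) / ∑ j, p j * Real.exp (w j * t)) := by
  have h1 := replicator_sol m w p hp.2 P hP0 hode
  have h2 := replicator_sol m w p hp.2 Ptilde hPtilde0 hodetilde
  exact ⟨fun t => funext fun i => (h1 t i).trans (h2 t i).symm, h1⟩
end
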